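/- arXiv:2202.13023 — 7 statements merged into one kernel-verified Lean document; each statement's English description precedes it below -/
import Mathlib

section
/- For every stopping time τ of the natural filtration of the observation sequence, the performance measures for the simple change-point problem with i.i.d. pre-change distribution P̃_0 and i.i.d. post-change distribution P̃_1 bound those of the anonymous problem: WADD̃(τ) ≤ WADD(τ) and ARL̃(τ) ≥ WARL(τ). -/
open MeasureTheory
open scoped ENNReal


private lemma enat_sub_tsum (a : ℕ∞) (ν : ℕ) :
    ENat.toENNReal (a - (ν : ℕ∞)) = ∑' s : ℕ, if ((ν + s : ℕ) : ℕ∞) < a then (1:ℝ≥0∞) else 0 := by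
  classical
  induction a using ENat.recTopCoe with
  | top =>
      have h1 : ∀ s : ℕ, (((ν + s : ℕ) : ℕ∞) < ⊤) := fun s =>
        lt_top_iff_ne_top.2 (ENat.coe_ne_top _)
      simp only [h1, if_true]
      rw [ENat.top_sub_coe, ENat.toENNReal_top, eq_comm]
      exact ENNReal.tsum_const_eq_top_of_ne_zero one_ne_zero
  | coe m =>
      have h1 : ∀ s : ℕ, (((ν + s : ℕ) : ℕ∞) < (m : ℕ∞)) ↔ s < m - ν := by
        intro s; rw [Nat.cast_lt]; omega
      simp only [h1]
      have h2 : ∑' s : ℕ, (if s < m - ν then (1:ℝ≥0∞) else 0)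
          = ∑ s ∈ Finset.range (m - ν), (if s < m - ν then (1:ℝ≥0∞) else 0) :=
        tsum_eq_sum (by intro s hs; rw [Finset.mem_range] at hs; simp [hs])
      have h3 : ∑ s ∈ Finset.range (m - ν), (if s < m - ν then (1:ℝ≥0∞) else 0)
          = ∑ _s ∈ Finset.range (m - ν), (1:ℝ≥0∞) :=
        Finset.sum_congr rfl (fun s hs => by rw [Finset.mem_range] at hs; simp [hs])
      rw [h2, h3, Finset.sum_const, Finset.card_range, nsmul_eq_mul, mul_one,
        ← ENat.coe_sub, ENat.toENNReal_coe]

private lemma lintegral_tsum_ite {α : Type*} [MeasurableSpace α] (μ : Measure α)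
    (p : ℕ → α → Prop) [∀ s x, Decidable (p s x)] (hp : ∀ s, MeasurableSet {x | p s x}) :
    ∫⁻ x, ∑' s : ℕ, (if p s x then (1:ℝ≥0∞) else 0) ∂μ = ∑' s : ℕ, μ {x | p s x} := by
  have h1 : ∀ s x, (if p s x then (1:ℝ≥0∞) else 0)
      = Set.indicator {x | p s x} (fun _ => 1) x := by
    intro s x
    by_cases h : p s x <;> simp [Set.indicator_apply, Set.mem_setOf_eq, h]
  simp_rw [h1]
  rw [lintegral_tsum (fun s => (measurable_const.indicator (hp s)).aemeasurable)]
  congr 1; funext s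
  rw [lintegral_indicator_const (hp s), one_mul]

private lemma exists_le_avg {I : Type*} [Fintype I] [Nonempty I] (w : ℝ≥0∞) (q : I → ℝ≥0∞)
    (hw : (Fintype.card I : ℝ≥0∞) * w = 1) : ∃ i, q i ≤ ∑ j, w * q j := by
  obtain ⟨i0, -, hi0⟩ := Finset.exists_min_image Finset.univ q ⟨Classical.arbitrary I,
    Finset.mem_univ _⟩
  refine ⟨i0, ?_⟩
  have : q i0 = ∑ _j : I, w * q i0 := by
    rw [Finset.sum_const, Finset.card_univ, nsmul_eq_mul, ← mul_assoc, hw, one_mul]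
  rw [this]
  exact Finset.sum_le_sum fun j _ => mul_le_mul_right (hi0 j (Finset.mem_univ j)) w

private lemma avg_le_iSup {I : Type*} [Fintype I] (w : ℝ≥0∞) (q : I → ℝ≥0∞)
    (hw : (Fintype.card I : ℝ≥0∞) * w = 1) : ∑ j, w * q j ≤ ⨆ j, q j := by
  calc ∑ j, w * q j ≤ ∑ _j : I, w * (⨆ i, q i) :=
        Finset.sum_le_sum fun j _ => mul_le_mul_right (le_iSup q j) w
    _ = ⨆ i, q i := by
        rw [Finset.sum_const, Finset.card_univ, nsmul_eq_mul, ← mul_assoc, hw, one_mul]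

private lemma koenig {E : Type*} [Finite E] [Nonempty E]
    (G : ℕ → (ℕ → E) → ℝ≥0∞) (b : ℝ≥0∞)
    (hdep : ∀ (N : ℕ) (Ω Ω' : ℕ → E), (∀ i, i < N → Ω i = Ω' i) → G N Ω = G N Ω')
    (hmono : ∀ N Ω, G N Ω ≤ G (N + 1) Ω)
    (hex : ∀ N, ∃ Ω, G N Ω ≤ b) :
    ∃ Ω, ∀ N, G N Ω ≤ b := by
  classical
  letI : TopologicalSpace E := ⊥
  haveI : DiscreteTopology E := ⟨rfl⟩
  set C : ℕ → Set (ℕ → E) := fun N => {Ω | G N Ω ≤ b} with hC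
  have hsub : ∀ N, C (N + 1) ⊆ C N := fun N Ω h => le_trans (hmono N Ω) h
  have hclosed : ∀ N, IsClosed (C N) := by
    intro N
    have hCeq : C N = (fun (Ω : ℕ → E) (j : Fin N) => Ω (j : ℕ)) ⁻¹'
        {v : Fin N → E | G N (fun t => if h : t < N then v ⟨t, h⟩ else Classical.arbitrary E) ≤ b} := by
      ext Ω
      simp only [hC, Set.mem_preimage, Set.mem_setOf_eq]
      have : G N Ω = G N (fun t => if h : t < N then Ω t else Classical.arbitrary E) :=
        hdep N _ _ (fun i hi => by simp [hi])
      rw [this]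
    rw [hCeq]
    exact IsClosed.preimage (continuous_pi fun j => continuous_apply _) (isClosed_discrete _)
  have hcpt : IsCompact (C 0) := (hclosed 0).isCompact
  obtain ⟨Ω, hΩ⟩ := IsCompact.nonempty_iInter_of_sequence_nonempty_isCompact_isClosed
    C hsub hex hcpt hclosed
  exact ⟨Ω, fun N => Set.mem_iInter.1 hΩ N⟩

private lemma pi_mixture {X E : Type*} [MeasurableSpace X] [Fintype E]
    (m : ℕ) (c : ℝ≥0∞) (μ : E → Measure X) (hμ : ∀ e, IsProbabilityMeasure (μ e))
    (ν : Measure X) (hν : ν = c • ∑ e, μ e) (hνp : IsProbabilityMeasure ν) :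
    Measure.pi (fun _ : Fin m => ν)
      = ∑ ρ : Fin m → E, (c ^ m) • Measure.pi (fun i => μ (ρ i)) := by
  classical
  haveI := hμ
  haveI := hνp
  refine Measure.pi_eq fun s hs => ?_
  have hν' : ∀ u : Set X, ν u = c * ∑ e, μ e u := by
    intro u
    rw [hν, Measure.smul_apply, Measure.finset_sum_apply, smul_eq_mul]
  rw [Measure.finset_sum_apply]
  simp_rw [Measure.smul_apply, smul_eq_mul, Measure.pi_pi, hν']
  rw [Finset.prod_mul_distrib, Finset.prod_const, Finset.card_univ, Fintype.card_fin,
    Fintype.prod_sum, Finset.mul_sum]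

/-- for every stopping time `τ` of the natural filtration of the observation
sequence, the performance measures of the simple change-point problem with i.i.d. pre-change
distribution `P̃_0` and i.i.d. post-change distribution `P̃_1` (the uniform mixtures over the
labeling class `Slam`) bound those of the anonymous problem:
`WADD̃(τ) ≤ WADD(τ)` and `ARL̃(τ) ≥ WARL(τ)`.

Time is indexed from `0` (time `t` here is the paper's time `t+1`); a change point `ν : ℕ`
means `X[t] ∼ ℙ_{0,σ_t}` for `t < ν` and `X[t] ∼ ℙ_{1,σ_t}` for `t ≥ ν`.  `PP` is the
infinite product of a sequence of probability measures on `𝒳^n`, characterized by its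
finite-dimensional marginals; Lorden's worst-case delay is expressed via independence: the
conditional expectation of `(τ − ν)⁺` given the pre-change samples `y` is the integral over
the post-change future `z` of `(τ(y ⌢ z) − ν)⁺`, and `WADD` is its essential supremum over
pre-change histories, maximized over `ν` and label sequences `Ω`. -/
theorem stmt_6 {𝒳 : Type*} [MeasurableSpace 𝒳]
    (n K : ℕ) (nk : Fin K → ℕ) (hn : ∑ k, nk k = n)
    (p : Bool → Fin K → Measure 𝒳)
    (hprob : ∀ θ k, IsProbabilityMeasure (p θ k))
    (Slam : Finset (Fin n → Fin K))
    (hSlam : Slam = Finset.univ.filter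
      (fun σ => ∀ k, (Finset.univ.filter (fun i => σ i = k)).card = nk k))
    (hSne : Slam.Nonempty)
    (Pm : Bool → (Fin n → Fin K) → Measure (Fin n → 𝒳))
    (hPm : ∀ θ σ, Pm θ σ = Measure.pi (fun i => p θ (σ i)))
    (Pt : Bool → Measure (Fin n → 𝒳))
    (hPt : ∀ θ, Pt θ = (Slam.card : ℝ≥0∞)⁻¹ • ∑ σ ∈ Slam, Pm θ σ)
    -- countably infinite products of probability measures on `𝒳^n`
    (PP : (ℕ → Measure (Fin n → 𝒳)) → Measure (ℕ → Fin n → 𝒳))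
    (hPP : ∀ μs : ℕ → Measure (Fin n → 𝒳), (∀ t, IsProbabilityMeasure (μs t)) →
      ∀ m : ℕ, Measure.map (fun ω (i : Fin m) => ω (i : ℕ)) (PP μs)
        = Measure.pi (fun i : Fin m => μs (i : ℕ)))
    -- concatenation of a pre-change history with a post-change future
    (splice : (ν : ℕ) → (Fin ν → (Fin n → 𝒳)) → (ℕ → (Fin n → 𝒳)) → (ℕ → (Fin n → 𝒳)))
    (hsplice : ∀ ν y z t, splice ν y z t = if h : t < ν then y ⟨t, h⟩ else z (t - ν))
    -- the natural filtration and stopping times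
    (IsStop : ((ℕ → (Fin n → 𝒳)) → ℕ∞) → Prop)
    (hIsStop : ∀ τ, IsStop τ ↔ ∀ t : ℕ,
      MeasurableSet[MeasurableSpace.comap
        (fun ω : ℕ → Fin n → 𝒳 => fun i : Fin (t + 1) => ω (i : ℕ)) inferInstance]
        {ω | τ ω ≤ (t : ℕ∞)})
    -- performance measures of the anonymous problem
    (WADD WARL : ((ℕ → (Fin n → 𝒳)) → ℕ∞) → ℝ≥0∞)
    (hWADD : ∀ τ, WADD τ
      = ⨆ (ν : ℕ) (Ω : ℕ → (Fin n → Fin K)) (_ : ∀ t, Ω t ∈ Slam),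
          essSup (fun y : Fin ν → (Fin n → 𝒳) =>
              ∫⁻ z, ENat.toENNReal (τ (splice ν y z) - (ν : ℕ∞))
                ∂(PP (fun s => Pm true (Ω (ν + s)))))
            (Measure.pi (fun i : Fin ν => Pm false (Ω (i : ℕ)))))
    (hWARL : ∀ τ, WARL τ
      = ⨅ (Ω : ℕ → (Fin n → Fin K)) (_ : ∀ t, Ω t ∈ Slam),
          ∫⁻ ω, ENat.toENNReal (τ ω) ∂(PP (fun t => Pm false (Ω t))))
    -- performance measures of the simple (mixture) problem
    (WADDt ARLt : ((ℕ → (Fin n → 𝒳)) → ℕ∞) → ℝ≥0∞)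
    (hWADDt : ∀ τ, WADDt τ
      = ⨆ (ν : ℕ),
          essSup (fun y : Fin ν → (Fin n → 𝒳) =>
              ∫⁻ z, ENat.toENNReal (τ (splice ν y z) - (ν : ℕ∞))
                ∂(PP (fun _ => Pt true)))
            (Measure.pi (fun _ : Fin ν => Pt false)))
    (hARLt : ∀ τ, ARLt τ = ∫⁻ ω, ENat.toENNReal (τ ω) ∂(PP (fun _ => Pt false))) :
    ∀ τ, IsStop τ → WADDt τ ≤ WADD τ ∧ WARL τ ≤ ARLt τ := by
  intro τ hτ
  classical
  haveI hp' : ∀ θ k, IsProbabilityMeasure (p θ k) := hprob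
  have hPmP : ∀ θ σ, IsProbabilityMeasure (Pm θ σ) := by
    intro θ σ; rw [hPm θ σ]; infer_instance
  have cardne : (Slam.card : ℝ≥0∞) ≠ 0 := Nat.cast_ne_zero.2 hSne.card_pos.ne'
  have cardnt : (Slam.card : ℝ≥0∞) ≠ ⊤ := ENNReal.natCast_ne_top _
  have hPtP : ∀ θ, IsProbabilityMeasure (Pt θ) := by
    intro θ
    constructor
    rw [hPt θ, Measure.smul_apply, Measure.finset_sum_apply, smul_eq_mul]
    rw [Finset.sum_congr rfl (fun σ _ => (hPmP θ σ).measure_univ), Finset.sum_const,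
      nsmul_eq_mul, mul_one]
    exact ENNReal.inv_mul_cancel cardne cardnt
  haveI hEne : Nonempty ↥Slam := ⟨⟨hSne.choose, hSne.choose_spec⟩⟩
  have hPtE : ∀ θ, Pt θ = (Slam.card : ℝ≥0∞)⁻¹ • ∑ e : ↥Slam, Pm θ (e : Fin n → Fin K) := by
    intro θ; rw [hPt θ]; congr 1; exact (Finset.sum_coe_sort Slam (Pm θ)).symm
  have hpiPt : ∀ (θ : Bool) (N : ℕ), Measure.pi (fun _ : Fin N => Pt θ)
      = ∑ ρ : Fin N → ↥Slam, (((Slam.card : ℝ≥0∞)⁻¹) ^ N) •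
          Measure.pi (fun i : Fin N => Pm θ ((ρ i : Fin n → Fin K))) :=
    fun θ N => pi_mixture N _ _ (fun e => hPmP θ _) (Pt θ) (hPtE θ) (hPtP θ)
  have hwN : ∀ N : ℕ,
      (Fintype.card (Fin N → ↥Slam) : ℝ≥0∞) * ((Slam.card : ℝ≥0∞)⁻¹) ^ N = 1 := by
    intro N
    rw [Fintype.card_fun, Fintype.card_coe, Fintype.card_fin, Nat.cast_pow, ← mul_pow,
      ENNReal.mul_inv_cancel cardne cardnt, one_pow]
  -- stopping-time cylinder structure
  have hstop := (hIsStop τ).1 hτ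
  choose T hTm hTp using fun t => (MeasurableSpace.measurableSet_comap).1 (hstop t)
  set A : ℕ → Set (ℕ → Fin n → 𝒳) := fun t => {ω | (t : ℕ∞) < τ ω} with hAdef
  have hA : ∀ t, A t = (fun (ω : ℕ → Fin n → 𝒳) (i : Fin (t + 1)) => ω (i : ℕ)) ⁻¹' (T t)ᶜ := by
    intro t
    rw [Set.preimage_compl, hTp t]
    ext ω
    simp [hAdef, not_le]
  have hr : ∀ m : ℕ, Measurable (fun (ω : ℕ → Fin n → 𝒳) (i : Fin m) => ω (i : ℕ)) :=
    fun m => measurable_pi_lambda _ fun i => measurable_pi_apply _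
  have hAm : ∀ t, MeasurableSet (A t) := fun t => by
    rw [hA t]; exact ((hTm t).compl).preimage (hr (t + 1))
  -- marginalization of the events A t
  have hmarg : ∀ (μs : ℕ → Measure (Fin n → 𝒳)), (∀ s, IsProbabilityMeasure (μs s)) →
      ∀ (t N : ℕ) (h : t + 1 ≤ N), PP μs (A t)
        = Measure.pi (fun i : Fin N => μs (i : ℕ))
            ((fun (w : Fin N → Fin n → 𝒳) (j : Fin (t + 1)) => w (Fin.castLE h j)) ⁻¹' (T t)ᶜ) := by
    intro μs hμs t N h
    have hres : Measurable (fun (w : Fin N → Fin n → 𝒳) (j : Fin (t + 1)) => w (Fin.castLE h j)) :=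
      measurable_pi_lambda _ fun j => measurable_pi_apply _
    have hACyl : A t = (fun (ω : ℕ → Fin n → 𝒳) (i : Fin N) => ω (i : ℕ)) ⁻¹'
        ((fun (w : Fin N → Fin n → 𝒳) (j : Fin (t + 1)) => w (Fin.castLE h j)) ⁻¹' (T t)ᶜ) := by
      rw [hA t, ← Set.preimage_comp]
      rfl
    rw [hACyl, ← Measure.map_apply (hr N) (((hTm t).compl).preimage hres), hPP μs hμs N]
  -- integral identities
  have hint : ∀ (μs : ℕ → Measure (Fin n → 𝒳)) (ν : ℕ),
      ∫⁻ ω, ENat.toENNReal (τ ω - (ν : ℕ∞)) ∂(PP μs) = ∑' s : ℕ, PP μs (A (ν + s)) := by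
    intro μs ν
    calc ∫⁻ ω, ENat.toENNReal (τ ω - (ν : ℕ∞)) ∂(PP μs)
        = ∫⁻ ω, ∑' s : ℕ, (if ((ν + s : ℕ) : ℕ∞) < τ ω then (1 : ℝ≥0∞) else 0) ∂(PP μs) :=
          lintegral_congr fun ω => enat_sub_tsum (τ ω) ν
      _ = ∑' s : ℕ, PP μs {ω | ((ν + s : ℕ) : ℕ∞) < τ ω} :=
          lintegral_tsum_ite _ _ (fun s => hAm (ν + s))
      _ = ∑' s : ℕ, PP μs (A (ν + s)) := rfl
  have hzero : ∀ (μs : ℕ → Measure (Fin n → 𝒳)),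
      ∫⁻ ω, ENat.toENNReal (τ ω) ∂(PP μs) = ∑' t : ℕ, PP μs (A t) := by
    intro μs
    have h := hint μs 0
    simpa using h
  have hsplmeas : ∀ (ν : ℕ) (y : Fin ν → Fin n → 𝒳), Measurable (fun z => splice ν y z) := by
    intro ν y
    have hrepr : (fun z => splice ν y z) = fun (z : ℕ → Fin n → 𝒳) (t : ℕ) =>
        if h : t < ν then y ⟨t, h⟩ else z (t - ν) := by
      funext z t; exact hsplice ν y z t
    rw [hrepr]
    refine measurable_pi_lambda _ fun t => ?_
    by_cases h : t < ν
    · simp only [h, dif_pos]; exact measurable_const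
    · simp only [h, dif_neg, not_false_iff]; exact measurable_pi_apply _
  have hintspl : ∀ (μs : ℕ → Measure (Fin n → 𝒳)) (ν : ℕ) (y : Fin ν → Fin n → 𝒳),
      ∫⁻ z, ENat.toENNReal (τ (splice ν y z) - (ν : ℕ∞)) ∂(PP μs)
        = ∑' s : ℕ, PP μs ((fun z => splice ν y z) ⁻¹' A (ν + s)) := by
    intro μs ν y
    calc ∫⁻ z, ENat.toENNReal (τ (splice ν y z) - (ν : ℕ∞)) ∂(PP μs)
        = ∫⁻ z, ∑' s : ℕ, (if ((ν + s : ℕ) : ℕ∞) < τ (splice ν y z) then (1 : ℝ≥0∞) else 0)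
            ∂(PP μs) := lintegral_congr fun z => enat_sub_tsum (τ (splice ν y z)) ν
      _ = ∑' s : ℕ, PP μs {z | ((ν + s : ℕ) : ℕ∞) < τ (splice ν y z)} :=
          lintegral_tsum_ite _ _ (fun s => (hAm (ν + s)).preimage (hsplmeas ν y))
      _ = ∑' s : ℕ, PP μs ((fun z => splice ν y z) ⁻¹' A (ν + s)) := rfl
  have hmargspl : ∀ (μs : ℕ → Measure (Fin n → 𝒳)), (∀ s, IsProbabilityMeasure (μs s)) →
      ∀ (ν : ℕ) (y : Fin ν → Fin n → 𝒳) (s N : ℕ) (h : s + 1 ≤ N),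
      PP μs ((fun z => splice ν y z) ⁻¹' A (ν + s))
        = Measure.pi (fun i : Fin N => μs (i : ℕ))
            ((fun (w : Fin N → Fin n → 𝒳) (j : Fin (ν + s + 1)) =>
                if hj : (j : ℕ) < ν then y ⟨(j : ℕ), hj⟩
                else w ⟨(j : ℕ) - ν, by have := j.isLt; omega⟩) ⁻¹' (T (ν + s))ᶜ) := by
    intro μs hμs ν y s N h
    have hφm : Measurable (fun (w : Fin N → Fin n → 𝒳) (j : Fin (ν + s + 1)) =>
        if hj : (j : ℕ) < ν then y ⟨(j : ℕ), hj⟩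
        else w ⟨(j : ℕ) - ν, by have := j.isLt; omega⟩) := by
      refine measurable_pi_lambda _ fun j => ?_
      by_cases hj : (j : ℕ) < ν
      · simp only [hj, dif_pos]; exact measurable_const
      · simp only [hj, dif_neg, not_false_iff]; exact measurable_pi_apply _
    have hcyl : (fun z => splice ν y z) ⁻¹' A (ν + s)
        = (fun (ω : ℕ → Fin n → 𝒳) (i : Fin N) => ω (i : ℕ)) ⁻¹'
          ((fun (w : Fin N → Fin n → 𝒳) (j : Fin (ν + s + 1)) =>
              if hj : (j : ℕ) < ν then y ⟨(j : ℕ), hj⟩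
              else w ⟨(j : ℕ) - ν, by have := j.isLt; omega⟩) ⁻¹' (T (ν + s))ᶜ) := by
      rw [hA (ν + s)]
      ext z
      simp only [Set.mem_preimage]
      have hfun : (fun (i : Fin (ν + s + 1)) => splice ν y z (i : ℕ))
          = (fun (j : Fin (ν + s + 1)) =>
              if hj : (j : ℕ) < ν then y ⟨(j : ℕ), hj⟩
              else (fun (i : Fin N) => z (i : ℕ)) ⟨(j : ℕ) - ν, by have := j.isLt; omega⟩) := by
        funext j
        rw [hsplice ν y z (j : ℕ)]
      rw [hfun]
    rw [hcyl, ← Measure.map_apply (hr N) (((hTm (ν + s)).compl).preimage hφm), hPP μs hμs N]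
  -- the extension of a finite label vector to an infinite label sequence
  set extend : ∀ N : ℕ, (Fin N → ↥Slam) → (ℕ → ↥Slam) :=
    fun N ρ t => if ht : t < N then ρ ⟨t, ht⟩ else Classical.arbitrary ↥Slam with hextend
  have hextendlt : ∀ (N : ℕ) (ρ : Fin N → ↥Slam) (i : Fin N), extend N ρ (i : ℕ) = ρ i := by
    intro N ρ i
    rw [hextend]
    simp only [i.isLt, dif_pos, Fin.eta]
  constructor
  · -- WADDt τ ≤ WADD τ
    rw [hWADDt τ]
    refine iSup_le fun ν => ?_
    set g : (ℕ → ↥Slam) → (Fin ν → Fin n → 𝒳) → ℝ≥0∞ := fun Λ y =>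
      ∫⁻ z, ENat.toENNReal (τ (splice ν y z) - (ν : ℕ∞))
        ∂(PP (fun s => Pm true ((Λ s : Fin n → Fin K)))) with hg
    have hstep1 : ∀ (ρ : Fin ν → ↥Slam) (Λ : ℕ → ↥Slam),
        essSup (g Λ) (Measure.pi (fun i : Fin ν => Pm false ((ρ i : Fin n → Fin K))))
          ≤ WADD τ := by
      intro ρ Λ
      set Ω : ℕ → Fin n → Fin K := fun t =>
        if h : t < ν then (ρ ⟨t, h⟩ : Fin n → Fin K) else (Λ (t - ν) : Fin n → Fin K) with hΩ
      have hval : ∀ t, Ω t ∈ Slam := by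
        intro t
        rw [hΩ]
        dsimp only
        split
        · exact (ρ _).2
        · exact (Λ _).2
      have hpre : (fun i : Fin ν => Pm false (Ω (i : ℕ)))
          = fun i : Fin ν => Pm false ((ρ i : Fin n → Fin K)) := by
        funext i
        rw [hΩ]
        simp only [i.isLt, dif_pos, Fin.eta]
      have hpost : (fun s => Pm true (Ω (ν + s))) = fun s => Pm true ((Λ s : Fin n → Fin K)) := by
        funext s
        have h1 : ¬(ν + s < ν) := by omega
        rw [hΩ]
        simp only [h1, dif_neg, not_false_iff, Nat.add_sub_cancel_left]
      rw [hWADD τ]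
      refine le_iSup_of_le ν (le_iSup_of_le Ω (le_iSup_of_le hval ?_))
      rw [hpre, hpost, hg]
    have hstep2 : ∀ y : Fin ν → Fin n → 𝒳,
        (∫⁻ z, ENat.toENNReal (τ (splice ν y z) - (ν : ℕ∞)) ∂(PP (fun _ => Pt true)))
          ≤ ⨆ (N : ℕ) (κ : Fin N → ↥Slam), g (extend N κ) y := by
      intro y
      rw [hintspl (fun _ => Pt true) ν y, ENNReal.tsum_eq_iSup_nat]
      refine iSup_le fun N => ?_
      refine le_trans ?_ (le_iSup _ N)
      have hterm : ∀ s ∈ Finset.range N,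
          PP (fun _ => Pt true) ((fun z => splice ν y z) ⁻¹' A (ν + s))
            = ∑ κ : Fin N → ↥Slam, (((Slam.card : ℝ≥0∞)⁻¹) ^ N) *
                PP (fun u => Pm true ((extend N κ u : Fin n → Fin K)))
                  ((fun z => splice ν y z) ⁻¹' A (ν + s)) := by
        intro s hs
        have hsN : s + 1 ≤ N := Finset.mem_range.1 hs
        rw [hmargspl _ (fun _ => hPtP true) ν y s N hsN, hpiPt true N, Measure.finset_sum_apply]
        refine Finset.sum_congr rfl fun κ _ => ?_
        have hfe : (fun i : Fin N => Pm true ((extend N κ ((i : Fin N) : ℕ) : Fin n → Fin K)))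
            = fun i : Fin N => Pm true ((κ i : Fin n → Fin K)) := by
          funext i; rw [hextendlt N κ i]
        rw [Measure.smul_apply, smul_eq_mul,
          hmargspl _ (fun u => hPmP true _) ν y s N hsN, hfe]
      rw [Finset.sum_congr rfl hterm, Finset.sum_comm]
      have hbd : ∀ κ : Fin N → ↥Slam,
          ∑ s ∈ Finset.range N, (((Slam.card : ℝ≥0∞)⁻¹) ^ N) *
              PP (fun u => Pm true ((extend N κ u : Fin n → Fin K)))
                ((fun z => splice ν y z) ⁻¹' A (ν + s))
            ≤ (((Slam.card : ℝ≥0∞)⁻¹) ^ N) * g (extend N κ) y := by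
        intro κ
        rw [← Finset.mul_sum]
        refine mul_le_mul_right ?_ _
        rw [hg]
        dsimp only
        rw [hintspl (fun u => Pm true ((extend N κ u : Fin n → Fin K))) ν y]
        exact ENNReal.sum_le_tsum _
      calc ∑ κ : Fin N → ↥Slam, ∑ s ∈ Finset.range N, (((Slam.card : ℝ≥0∞)⁻¹) ^ N) *
              PP (fun u => Pm true ((extend N κ u : Fin n → Fin K)))
                ((fun z => splice ν y z) ⁻¹' A (ν + s))
          ≤ ∑ κ : Fin N → ↥Slam, (((Slam.card : ℝ≥0∞)⁻¹) ^ N) * g (extend N κ) y :=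
            Finset.sum_le_sum fun κ _ => hbd κ
        _ ≤ ⨆ κ : Fin N → ↥Slam, g (extend N κ) y := avg_le_iSup _ _ (hwN N)
    have hall : ∀ ρ : Fin ν → ↥Slam,
        ∀ᵐ y ∂(Measure.pi (fun i : Fin ν => Pm false ((ρ i : Fin n → Fin K)))),
          ∀ (N : ℕ) (κ : Fin N → ↥Slam), g (extend N κ) y ≤ WADD τ := by
      intro ρ
      rw [ae_all_iff]
      intro N
      rw [ae_all_iff]
      intro κ
      exact (ENNReal.ae_le_essSup (g (extend N κ))).mono fun y hy => hy.trans (hstep1 ρ (extend N κ))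
    have hbadset : ∀ᵐ y ∂(Measure.pi (fun _ : Fin ν => Pt false)),
        ∀ (N : ℕ) (κ : Fin N → ↥Slam), g (extend N κ) y ≤ WADD τ := by
      rw [ae_iff]
      rw [hpiPt false ν, Measure.finset_sum_apply]
      refine Finset.sum_eq_zero fun ρ _ => ?_
      rw [Measure.smul_apply, smul_eq_mul]
      have h0 := hall ρ
      rw [ae_iff] at h0
      rw [h0, mul_zero]
    refine essSup_le_of_ae_le _ ?_
    filter_upwards [hbadset] with y hy
    exact (hstep2 y).trans (iSup_le fun N => iSup_le fun κ => hy N κ)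
  · -- WARL τ ≤ ARLt τ
    set G : ℕ → (ℕ → ↥Slam) → ℝ≥0∞ := fun N Λ =>
      ∑ t ∈ Finset.range N, PP (fun s => Pm false ((Λ s : Fin n → Fin K))) (A t) with hG
    have hGdep : ∀ (N : ℕ) (Λ Λ' : ℕ → ↥Slam), (∀ i, i < N → Λ i = Λ' i) → G N Λ = G N Λ' := by
      intro N Λ Λ' hagree
      refine Finset.sum_congr rfl fun t ht => ?_
      have h1 : t + 1 ≤ N := Finset.mem_range.1 ht
      rw [hmarg _ (fun s => hPmP false _) t N h1, hmarg _ (fun s => hPmP false _) t N h1]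
      congr 2
      funext i
      rw [hagree (i : ℕ) i.isLt]
    have hGmono : ∀ (N : ℕ) (Λ : ℕ → ↥Slam), G N Λ ≤ G (N + 1) Λ := by
      intro N Λ
      exact Finset.sum_le_sum_of_subset (Finset.range_subset_range.2 (Nat.le_succ N))
    have hARLt' : ARLt τ = ∑' t : ℕ, PP (fun _ => Pt false) (A t) := by
      rw [hARLt τ, hzero]
    have hPPmix : ∀ (t N : ℕ), t + 1 ≤ N → PP (fun _ => Pt false) (A t)
        = ∑ ρ : Fin N → ↥Slam, (((Slam.card : ℝ≥0∞)⁻¹) ^ N) *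
            PP (fun s => Pm false ((extend N ρ s : Fin n → Fin K))) (A t) := by
      intro t N h
      rw [hmarg _ (fun _ => hPtP false) t N h, hpiPt false N, Measure.finset_sum_apply]
      refine Finset.sum_congr rfl fun ρ _ => ?_
      have hfe : (fun i : Fin N => Pm false ((extend N ρ ((i : Fin N) : ℕ) : Fin n → Fin K)))
          = fun i : Fin N => Pm false ((ρ i : Fin n → Fin K)) := by
        funext i; rw [hextendlt N ρ i]
      rw [Measure.smul_apply, smul_eq_mul, hmarg _ (fun s => hPmP false _) t N h, hfe]
    have hGkey : ∀ N : ℕ, ∑ t ∈ Finset.range N, PP (fun _ => Pt false) (A t)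
        = ∑ ρ : Fin N → ↥Slam, (((Slam.card : ℝ≥0∞)⁻¹) ^ N) * G N (extend N ρ) := by
      intro N
      rw [Finset.sum_congr rfl (fun t ht => hPPmix t N (Finset.mem_range.1 ht)),
        Finset.sum_comm]
      refine Finset.sum_congr rfl fun ρ _ => ?_
      rw [hG]
      dsimp only
      rw [Finset.mul_sum]
    have hEx : ∀ N : ℕ, ∃ Λ : ℕ → ↥Slam, G N Λ ≤ ARLt τ := by
      intro N
      have hle : ∑ t ∈ Finset.range N, PP (fun _ => Pt false) (A t) ≤ ARLt τ := by
        rw [hARLt']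
        exact ENNReal.sum_le_tsum _
      rw [hGkey N] at hle
      obtain ⟨ρ, hρ⟩ := exists_le_avg (((Slam.card : ℝ≥0∞)⁻¹) ^ N)
        (fun ρ : Fin N → ↥Slam => G N (extend N ρ)) (hwN N)
      exact ⟨extend N ρ, le_trans hρ hle⟩
    obtain ⟨Λ, hΛ⟩ := koenig G (ARLt τ) hGdep hGmono hEx
    have hval : ∀ t, ((Λ t : Fin n → Fin K)) ∈ Slam := fun t => (Λ t).2
    have hbound : ∫⁻ ω, ENat.toENNReal (τ ω)
        ∂(PP (fun t => Pm false ((Λ t : Fin n → Fin K)))) ≤ ARLt τ := by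
      rw [hzero, ENNReal.tsum_eq_iSup_nat]
      refine iSup_le fun N => ?_
      have h0 := hΛ N
      rw [hG] at h0
      exact h0
    rw [hWARL τ]
    exact iInf_le_of_le (fun t => (Λ t : Fin n → Fin K)) (iInf_le_of_le hval hbound)
end

section
/- For every threshold b > 0, the mixture CuSum rule τ*(b) achieves equality between the anonymous and the mixture (simple) performance measures: WADD(τ*(b)) = WADD̃(τ*(b)) and WARL(τ*(b)) = ARL̃(τ*(b)). -/
open MeasureTheory
open scoped ENNReal

namespace Stmt7

noncomputable section

def cseq (ν m : ℕ) (q : (Fin ν → ℝ≥0∞) × (Fin (m+1) → ℝ≥0∞)) (i : ℕ) : ℝ≥0∞ :=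
  if h : i < ν then q.1 ⟨i, h⟩ else q.2 ⟨min (i - ν) m, Nat.lt_succ_of_le (min_le_right _ _)⟩

def noCross (E : ℝ≥0∞) (ν m : ℕ) : Set ((Fin ν → ℝ≥0∞) × (Fin (m+1) → ℝ≥0∞)) :=
  {q | ∀ s : ℕ, s ≤ ν + m → ∀ j : ℕ, j ≤ s → ¬ (E ≤ ∏ i ∈ Finset.Icc j s, cseq ν m q i)}

lemma measurable_cseq (ν m i : ℕ) : Measurable (fun q => cseq ν m q i) := by
  by_cases h : i < ν
  · simp only [cseq, dif_pos h]; exact (measurable_pi_apply _).comp measurable_fst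
  · simp only [cseq, dif_neg h]; exact (measurable_pi_apply _).comp measurable_snd

lemma measurableSet_noCross (E : ℝ≥0∞) (ν m : ℕ) : MeasurableSet (noCross E ν m) := by
  have h : noCross E ν m = ⋂ (s : ℕ) (_ : s ≤ ν + m) (j : ℕ) (_ : j ≤ s),
      {q : (Fin ν → ℝ≥0∞) × (Fin (m+1) → ℝ≥0∞) |
        E ≤ ∏ i ∈ Finset.Icc j s, cseq ν m q i}ᶜ := by
    ext q; simp [noCross]
  rw [h]
  exact MeasurableSet.iInter fun s => MeasurableSet.iInter fun _ =>
    MeasurableSet.iInter fun j => MeasurableSet.iInter fun _ =>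
      (measurableSet_le measurable_const
        (Finset.measurable_prod _ fun i _ => measurable_cseq ν m i)).compl

def Hfun (E : ℝ≥0∞) (κ : Measure ℝ≥0∞) (ν : ℕ) (r : Fin ν → ℝ≥0∞) : ℝ≥0∞ :=
  ∑' m : ℕ, Measure.pi (fun _ : Fin (m+1) => κ) (Prod.mk r ⁻¹' noCross E ν m)

lemma measurable_Hfun (E : ℝ≥0∞) (κ : Measure ℝ≥0∞) [IsProbabilityMeasure κ] (ν : ℕ) :
    Measurable (Hfun E κ ν) :=
  Measurable.ennreal_tsum fun m =>
    measurable_measure_prodMk_left (measurableSet_noCross E ν m)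

lemma map_pi_perm {𝒳 : Type*} [MeasurableSpace 𝒳] {n : ℕ} (μ : Fin n → Measure 𝒳)
    [∀ i, IsProbabilityMeasure (μ i)] (e : Equiv.Perm (Fin n)) :
    Measure.map (fun x : Fin n → 𝒳 => x ∘ e) (Measure.pi μ)
      = Measure.pi (fun i => μ (e i)) := by
  symm
  apply Measure.pi_eq
  intro s hs
  rw [Measure.map_apply (show Measurable (fun x : Fin n → 𝒳 => x ∘ e) from
    measurable_pi_lambda _ fun i => measurable_pi_apply (e i)) (MeasurableSet.univ_pi hs)]
  have hpre : (fun x : Fin n → 𝒳 => x ∘ e) ⁻¹' (Set.univ.pi s)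
      = Set.univ.pi (fun j => s (e.symm j)) := by
    ext x
    simp only [Set.mem_preimage, Set.mem_univ_pi, Function.comp_apply]
    constructor
    · intro h j
      have h2 := h (e.symm j)
      rwa [show e (e.symm j) = j from e.apply_symm_apply j] at h2
    · intro h i
      have h2 := h (e i)
      rwa [show e.symm (e i) = i from e.symm_apply_apply i] at h2
  rw [hpre, Measure.pi_pi]
  calc (∏ j, μ j (s (e.symm j)))
      = ∏ i, μ (e i) (s (e.symm (e i))) := (Equiv.prod_comp e fun j => μ j (s (e.symm j))).symm
    _ = ∏ i, μ (e i) (s i) := Finset.prod_congr rfl fun i _ => by rw [Equiv.symm_apply_apply]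

lemma map_pi_comp {α β : Type*} [MeasurableSpace α] [MeasurableSpace β] {m : ℕ}
    (μs : Fin m → Measure α) [∀ i, IsProbabilityMeasure (μs i)] {F : α → β}
    (hF : Measurable F) :
    Measure.map (fun v (i : Fin m) => F (v i)) (Measure.pi μs)
      = Measure.pi (fun i => Measure.map F (μs i)) := by
  haveI : ∀ i, IsProbabilityMeasure (Measure.map F (μs i)) :=
    fun i => Measure.isProbabilityMeasure_map hF.aemeasurable
  symm
  apply Measure.pi_eq
  intro s hs
  rw [Measure.map_apply (show Measurable (fun (v : Fin m → α) (i : Fin m) => F (v i)) from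
    measurable_pi_lambda _ fun i => hF.comp (measurable_pi_apply i)) (MeasurableSet.univ_pi hs)]
  have hpre : (fun (v : Fin m → α) (i : Fin m) => F (v i)) ⁻¹' (Set.univ.pi s)
      = Set.univ.pi (fun i => F ⁻¹' s i) := by
    ext v; simp
  rw [hpre, Measure.pi_pi]
  exact Finset.prod_congr rfl fun i _ => (Measure.map_apply hF (hs i)).symm

lemma toENNReal_eq_tsum (a : ℕ∞) :
    (ENat.toENNReal a) = ∑' m : ℕ, if (m : ℕ∞) < a then 1 else 0 := by
  induction a using ENat.recTopCoe with
  | top =>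
    rw [ENat.toENNReal_top]
    have h : ∀ m : ℕ, ((m : ℕ∞) < (⊤ : ℕ∞)) := fun m => lt_of_le_of_ne le_top (by simp)
    simp only [h, if_true]
    exact (ENNReal.tsum_const_eq_top_of_ne_zero one_ne_zero).symm
  | coe k =>
    rw [ENat.toENNReal_coe]
    have h2 : ∀ m : ℕ, m ∉ Finset.range k → (if (m : ℕ∞) < (k : ℕ∞) then (1:ℝ≥0∞) else 0) = 0 := by
      intro m hm
      refine if_neg ?_
      have : ¬ m < k := fun h => hm (Finset.mem_range.mpr h)
      exact_mod_cast this
    rw [tsum_eq_sum h2]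
    have h1 : ∀ m ∈ Finset.range k, (if (m : ℕ∞) < (k : ℕ∞) then (1:ℝ≥0∞) else 0) = 1 := by
      intro m hm
      exact if_pos (by exact_mod_cast Finset.mem_range.mp hm)
    rw [Finset.sum_congr rfl h1]
    simp

lemma log_le_iff {b : EReal} {X : ℝ≥0∞} : b ≤ ENNReal.log X ↔ EReal.exp b ≤ X := by
  constructor
  · intro h
    have := EReal.expOrderIso.monotone h
    simpa using this
  · intro h
    have := ENNReal.log_monotone h
    rwa [show ENNReal.log (EReal.exp b) = b from EReal.log_exp b] at this

lemma log_prod {ι : Type*} (s : Finset ι) (c : ι → ℝ≥0∞) :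
    ENNReal.log (∏ i ∈ s, c i) = ∑ i ∈ s, ENNReal.log (c i) := by
  induction s using Finset.cons_induction with
  | empty => simp
  | cons a t ha ih => rw [Finset.prod_cons, Finset.sum_cons, ENNReal.log_mul_add, ih]

end

end Stmt7


open MeasureTheory
open scoped ENNReal

/-- for every threshold `b > 0`, the mixture CuSum rule `τstar b` achieves
equality between the anonymous and the mixture (simple i.i.d.) performance measures:
`WADD(τstar b) = WADD̃(τstar b)` and `WARL(τstar b) = ARL̃(τstar b)`.

Time is indexed from `0` (time `t` here is the paper's time `t+1`).  `PP` is the countably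
infinite product of probability measures on `𝒳^n` characterized by its finite-dimensional
marginals; Lorden's worst-case delay is expressed via independence, as the essential
supremum over pre-change histories `y` of the integral over the post-change future `z` of
`(τ(y ⌢ z) − ν)⁺`. -/
theorem stmt_7 {𝒳 : Type*} [MeasurableSpace 𝒳]
    (n K : ℕ) (nk : Fin K → ℕ) (hn : ∑ k, nk k = n)
    (p : Bool → Fin K → Measure 𝒳)
    (hprob : ∀ θ k, IsProbabilityMeasure (p θ k))
    (μref : Measure 𝒳) [SigmaFinite μref]
    (f : Bool → Fin K → 𝒳 → ℝ≥0∞)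
    (hfmeas : ∀ θ k, Measurable (f θ k))
    (hdens : ∀ θ k, p θ k = μref.withDensity (f θ k))
    (Slam : Finset (Fin n → Fin K))
    (hSlam : Slam = Finset.univ.filter
      (fun σ => ∀ k, (Finset.univ.filter (fun i => σ i = k)).card = nk k))
    (hSne : Slam.Nonempty)
    (Pm : Bool → (Fin n → Fin K) → Measure (Fin n → 𝒳))
    (hPm : ∀ θ σ, Pm θ σ = Measure.pi (fun i => p θ (σ i)))
    (Pt : Bool → Measure (Fin n → 𝒳))
    (hPt : ∀ θ, Pt θ = (Slam.card : ℝ≥0∞)⁻¹ • ∑ σ ∈ Slam, Pm θ σ)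
    -- countably infinite products of probability measures on `𝒳^n`
    (PP : (ℕ → Measure (Fin n → 𝒳)) → Measure (ℕ → Fin n → 𝒳))
    (hPP : ∀ μs : ℕ → Measure (Fin n → 𝒳), (∀ t, IsProbabilityMeasure (μs t)) →
      ∀ m : ℕ, Measure.map (fun ω (i : Fin m) => ω (i : ℕ)) (PP μs)
        = Measure.pi (fun i : Fin m => μs (i : ℕ)))
    -- concatenation of a pre-change history with a post-change future
    (splice : (ν : ℕ) → (Fin ν → (Fin n → 𝒳)) → (ℕ → (Fin n → 𝒳)) → (ℕ → (Fin n → 𝒳)))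
    (hsplice : ∀ ν y z t, splice ν y z t = if h : t < ν then y ⟨t, h⟩ else z (t - ν))
    -- performance measures of the anonymous problem
    (WADD WARL : ((ℕ → (Fin n → 𝒳)) → ℕ∞) → ℝ≥0∞)
    (hWADD : ∀ τ, WADD τ
      = ⨆ (ν : ℕ) (Ω : ℕ → (Fin n → Fin K)) (_ : ∀ t, Ω t ∈ Slam),
          essSup (fun y : Fin ν → (Fin n → 𝒳) =>
              ∫⁻ z, ENat.toENNReal (τ (splice ν y z) - (ν : ℕ∞))
                ∂(PP (fun s => Pm true (Ω (ν + s)))))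
            (Measure.pi (fun i : Fin ν => Pm false (Ω (i : ℕ)))))
    (hWARL : ∀ τ, WARL τ
      = ⨅ (Ω : ℕ → (Fin n → Fin K)) (_ : ∀ t, Ω t ∈ Slam),
          ∫⁻ ω, ENat.toENNReal (τ ω) ∂(PP (fun t => Pm false (Ω t))))
    -- performance measures of the simple (mixture) problem
    (WADDt ARLt : ((ℕ → (Fin n → 𝒳)) → ℕ∞) → ℝ≥0∞)
    (hWADDt : ∀ τ, WADDt τ
      = ⨆ (ν : ℕ),
          essSup (fun y : Fin ν → (Fin n → 𝒳) =>
              ∫⁻ z, ENat.toENNReal (τ (splice ν y z) - (ν : ℕ∞))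
                ∂(PP (fun _ => Pt true)))
            (Measure.pi (fun _ : Fin ν => Pt false)))
    (hARLt : ∀ τ, ARLt τ = ∫⁻ ω, ENat.toENNReal (τ ω) ∂(PP (fun _ => Pt false)))
    -- the mixture likelihood ratio and the mixture CuSum stopping rule
    (ℓ : (Fin n → 𝒳) → ℝ≥0∞)
    (hℓ : ∀ x, ℓ x = (∑ σ ∈ Slam, ∏ i, f true (σ i) (x i))
                      / (∑ σ ∈ Slam, ∏ i, f false (σ i) (x i)))
    (τstar : ℝ → (ℕ → Fin n → 𝒳) → ℕ∞)
    (hτstar : ∀ b ω, τstar b ω = sInf {t : ℕ∞ | ∃ s : ℕ, t = (s : ℕ∞)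
      ∧ ∃ j ≤ s, (b : EReal) ≤ ∑ i ∈ Finset.Icc j s, ENNReal.log (ℓ (ω i))}) :
    ∀ b : ℝ, 0 < b →
      WADD (τstar b) = WADDt (τstar b) ∧ WARL (τstar b) = ARLt (τstar b) := by
  intro b hb
  classical
  obtain ⟨σ₀, hσ₀⟩ := hSne
  set Eb : ℝ≥0∞ := EReal.exp (b : EReal) with hEbdef
  -- measurability of ℓ
  have hsummeas : ∀ θ, Measurable fun x : Fin n → 𝒳 => ∑ σ ∈ Slam, ∏ i, f θ (σ i) (x i) :=
    fun θ => Finset.measurable_sum _ fun σ _ =>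
      Finset.measurable_prod _ fun i _ => (hfmeas θ (σ i)).comp (measurable_pi_apply i)
  have hℓmeas : Measurable ℓ := by
    have hfe : ℓ = fun x => (∑ σ ∈ Slam, ∏ i, f true (σ i) (x i))
        / (∑ σ ∈ Slam, ∏ i, f false (σ i) (x i)) := funext hℓ
    rw [hfe]; exact (hsummeas true).div (hsummeas false)
  -- basic probability facts
  have hPmprob : ∀ θ σ, IsProbabilityMeasure (Pm θ σ) := by
    intro θ σ; rw [hPm]
    haveI : ∀ i, IsProbabilityMeasure (p θ (σ i)) := fun i => hprob θ (σ i)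
    infer_instance
  have hcardne : ((Slam.card : ℝ≥0∞)) ≠ 0 := by
    have : Slam.card ≠ 0 := Finset.card_ne_zero.mpr ⟨σ₀, hσ₀⟩
    exact_mod_cast this
  have hcardtop : ((Slam.card : ℝ≥0∞)) ≠ ⊤ := ENNReal.natCast_ne_top _
  have hPtprob : ∀ θ, IsProbabilityMeasure (Pt θ) := by
    intro θ
    constructor
    rw [hPt, Measure.smul_apply, Measure.finset_sum_apply,
      Finset.sum_congr rfl fun σ _ => (by haveI := hPmprob θ σ; exact measure_univ),
      Finset.sum_const, nsmul_eq_mul, mul_one, smul_eq_mul,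
      ENNReal.inv_mul_cancel hcardne hcardtop]
  -- combinatorics of Slam
  have hmemSlam : ∀ σ ∈ Slam, ∀ k,
      (Finset.univ.filter (fun i => σ i = k)).card = nk k := by
    intro σ hσ k
    rw [hSlam] at hσ
    exact (Finset.mem_filter.mp hσ).2 k
  have hcompSlam : ∀ (e : Equiv.Perm (Fin n)), ∀ σ ∈ Slam, σ ∘ e ∈ Slam := by
    intro e σ hσ
    rw [hSlam]
    refine Finset.mem_filter.mpr ⟨Finset.mem_univ _, fun k => ?_⟩
    have himg : (Finset.univ.filter fun i => (σ ∘ e) i = k)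
        = Finset.image e.symm (Finset.univ.filter fun i => σ i = k) := by
      ext i
      simp only [Finset.mem_filter, Finset.mem_univ, true_and, Finset.mem_image,
        Function.comp_apply]
      constructor
      · intro h; exact ⟨e i, h, e.symm_apply_apply i⟩
      · rintro ⟨j, hj, rfl⟩
        rwa [show e (e.symm j) = j from e.apply_symm_apply j]
    rw [himg, Finset.card_image_of_injective _ e.symm.injective]
    exact hmemSlam σ hσ k
  have hperm : ∀ σ ∈ Slam, ∀ σ' ∈ Slam, ∃ e : Equiv.Perm (Fin n), σ ∘ e = σ' := by
    intro σ hσ σ' hσ'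
    have hfib : ∀ k, Fintype.card {i // σ' i = k} = Fintype.card {i // σ i = k} := by
      intro k
      rw [Fintype.card_subtype, Fintype.card_subtype]
      exact (hmemSlam σ' hσ' k).trans (hmemSlam σ hσ k).symm
    exact ⟨Equiv.ofFiberEquiv (f := σ') (g := σ) (fun k => Fintype.equivOfCardEq (hfib k)),
      funext fun i => Equiv.ofFiberEquiv_map (f := σ') (g := σ) _ i⟩
  -- invariance of ℓ under permutations
  have hsuminv : ∀ θ (e : Equiv.Perm (Fin n)) (x : Fin n → 𝒳),
      ∑ σ ∈ Slam, ∏ i, f θ (σ i) (x (e i)) = ∑ σ ∈ Slam, ∏ i, f θ (σ i) (x i) := by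
    intro θ e x
    have hterm : ∀ σ : Fin n → Fin K,
        (∏ i, f θ (σ i) (x (e i))) = ∏ i, f θ ((σ ∘ e.symm) i) (x i) := by
      intro σ
      calc (∏ i, f θ (σ i) (x (e i)))
          = ∏ i, f θ ((σ ∘ e.symm) (e i)) (x (e i)) := by
            refine Finset.prod_congr rfl fun i _ => ?_
            rw [Function.comp_apply, e.symm_apply_apply]
        _ = ∏ i, f θ ((σ ∘ e.symm) i) (x i) :=
            Equiv.prod_comp e fun i => f θ ((σ ∘ e.symm) i) (x i)
    rw [Finset.sum_congr rfl fun σ _ => hterm σ]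
    refine Finset.sum_nbij' (i := fun τ => τ ∘ e.symm) (j := fun τ => τ ∘ e)
      (fun τ hτ => hcompSlam e.symm τ hτ) (fun τ hτ => hcompSlam e τ hτ)
      (fun τ _ => funext fun i => ?_) (fun τ _ => funext fun i => ?_) (fun τ _ => rfl)
    · simp [Function.comp, e.symm_apply_apply]
    · simp [Function.comp, e.apply_symm_apply]
  have hℓinv : ∀ (e : Equiv.Perm (Fin n)) (x : Fin n → 𝒳), ℓ (x ∘ e) = ℓ x := by
    intro e x
    rw [hℓ, hℓ]
    simp only [Function.comp_apply]
    rw [hsuminv true e x, hsuminv false e x]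
  -- pushforwards of ℓ agree
  have hmapPmEq : ∀ θ, ∀ σ ∈ Slam, ∀ σ' ∈ Slam,
      Measure.map ℓ (Pm θ σ') = Measure.map ℓ (Pm θ σ) := by
    intro θ σ hσ σ' hσ'
    obtain ⟨e, he⟩ := hperm σ hσ σ' hσ'
    have h1 : Pm θ σ' = Measure.map (fun x => x ∘ e) (Pm θ σ) := by
      rw [hPm, hPm]
      haveI : ∀ i, IsProbabilityMeasure (p θ (σ i)) := fun i => hprob _ _
      rw [Stmt7.map_pi_perm (fun i => p θ (σ i)) e]
      exact congrArg Measure.pi (funext fun i => congrArg (p θ) (congrFun he i).symm)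
    have hcomp : Measurable fun (x : Fin n → 𝒳) => x ∘ e :=
      measurable_pi_lambda _ fun i => measurable_pi_apply (e i)
    rw [h1, Measure.map_map hℓmeas hcomp]
    exact congrArg (fun F => Measure.map F (Pm θ σ)) (funext fun x => hℓinv e x)
  have hmapPt : ∀ θ, ∀ σc ∈ Slam,
      Measure.map ℓ (Pt θ) = Measure.map ℓ (Pm θ σc) := by
    intro θ σc hσc
    refine Measure.ext fun s hs => ?_
    rw [Measure.map_apply hℓmeas hs, hPt, Measure.smul_apply, Measure.finset_sum_apply]
    have hterm : ∀ σ ∈ Slam, Pm θ σ (ℓ ⁻¹' s) = Pm θ σc (ℓ ⁻¹' s) := by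
      intro σ hσ
      have h2 := hmapPmEq θ σc hσc σ hσ
      calc Pm θ σ (ℓ ⁻¹' s) = Measure.map ℓ (Pm θ σ) s :=
            (Measure.map_apply hℓmeas hs).symm
        _ = Measure.map ℓ (Pm θ σc) s := by rw [h2]
        _ = Pm θ σc (ℓ ⁻¹' s) := Measure.map_apply hℓmeas hs
    rw [Finset.sum_congr rfl hterm, Finset.sum_const, nsmul_eq_mul, smul_eq_mul,
      ← mul_assoc, ENNReal.inv_mul_cancel hcardne hcardtop, one_mul,
      Measure.map_apply hℓmeas hs]
  -- the crossing condition, multiplicatively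
  have hcross : ∀ (c : ℕ → ℝ≥0∞) (j s : ℕ),
      ((b : EReal) ≤ ∑ i ∈ Finset.Icc j s, ENNReal.log (c i))
        ↔ Eb ≤ ∏ i ∈ Finset.Icc j s, c i := by
    intro c j s
    rw [← Stmt7.log_prod]
    exact Stmt7.log_le_iff
  -- characterization of the stopping time
  have hτchar : ∀ (ω : ℕ → Fin n → 𝒳) (m' : ℕ),
      ((m' : ℕ∞) < τstar b ω) ↔ ∀ s : ℕ, s ≤ m' → ∀ j : ℕ, j ≤ s →
        ¬ (Eb ≤ ∏ i ∈ Finset.Icc j s, ℓ (ω i)) := by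
    intro ω m'
    rw [hτstar]
    constructor
    · intro h s hs j hj hcr
      have hmem : ((s : ℕ∞)) ∈ {t : ℕ∞ | ∃ s' : ℕ, t = (s' : ℕ∞) ∧ ∃ j' ≤ s',
          (b : EReal) ≤ ∑ i ∈ Finset.Icc j' s', ENNReal.log (ℓ (ω i))} :=
        ⟨s, rfl, j, hj, (hcross (fun i => ℓ (ω i)) j s).mpr hcr⟩
      exact absurd ((sInf_le hmem).trans (by exact_mod_cast hs)) h.not_ge
    · intro h
      refine lt_of_lt_of_le (b := (((m' + 1 : ℕ)) : ℕ∞))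
        (by exact_mod_cast Nat.lt_succ_self m') (le_sInf ?_)
      rintro t ⟨s, rfl, j, hj, hcr⟩
      have hns : ¬ s ≤ m' := fun hs => h s hs j hj ((hcross (fun i => ℓ (ω i)) j s).mp hcr)
      exact_mod_cast Nat.succ_le_of_lt (not_le.mp hns)
  -- the MAIN finite-dimensional reduction
  have MAIN : ∀ (ν : ℕ) (μs : ℕ → Measure (Fin n → 𝒳)),
      (∀ s, IsProbabilityMeasure (μs s)) → ∀ (y : Fin ν → Fin n → 𝒳),
      (∫⁻ z, (ENat.toENNReal (τstar b (splice ν y z) - (ν : ℕ∞))) ∂(PP μs))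
        = ∑' m : ℕ, Measure.pi (fun i : Fin (m+1) => Measure.map ℓ (μs (i : ℕ)))
            (Prod.mk (fun i => ℓ (y i)) ⁻¹' Stmt7.noCross Eb ν m) := by
    intro ν μs hμ y
    have hev : ∀ (m : ℕ) (z : ℕ → Fin n → 𝒳),
        ((m : ℕ∞) < τstar b (splice ν y z) - (ν : ℕ∞))
          ↔ (fun i : Fin (m+1) => ℓ (z (i : ℕ))) ∈
              (Prod.mk (fun i => ℓ (y i)) ⁻¹' Stmt7.noCross Eb ν m) := by
      intro m z
      rw [lt_tsub_iff_left,
        show ((ν : ℕ∞) + (m : ℕ∞)) = (((ν + m : ℕ)) : ℕ∞) from (Nat.cast_add ν m).symm,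
        hτchar (splice ν y z) (ν + m)]
      have hpt : ∀ s, s ≤ ν + m → ∀ j,
          (∏ i ∈ Finset.Icc j s, ℓ (splice ν y z i))
            = ∏ i ∈ Finset.Icc j s,
                Stmt7.cseq ν m ((fun i => ℓ (y i)), fun i : Fin (m+1) => ℓ (z (i : ℕ))) i := by
        intro s hs j
        refine Finset.prod_congr rfl fun i hi => ?_
        have his : i ≤ s := (Finset.mem_Icc.mp hi).2
        rw [hsplice]
        by_cases h : i < ν
        · rw [dif_pos h]; simp [Stmt7.cseq, h]
        · rw [dif_neg h]
          have hmin : min (i - ν) m = i - ν := min_eq_left (by omega)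
          simp [Stmt7.cseq, h, hmin]
      simp only [Set.mem_preimage, Stmt7.noCross, Set.mem_setOf_eq]
      constructor
      · intro h s hs j hj
        rw [← hpt s hs j]
        exact h s hs j hj
      · intro h s hs j hj
        rw [hpt s hs j]
        exact h s hs j hj
    set A : ℕ → Set (ℕ → Fin n → 𝒳) :=
      fun m => {z | (m : ℕ∞) < τstar b (splice ν y z) - (ν : ℕ∞)} with hA
    have hproj : ∀ m : ℕ, Measurable fun (z : ℕ → Fin n → 𝒳) (i : Fin (m+1)) => z (i : ℕ) :=
      fun m => measurable_pi_lambda _ fun i => measurable_pi_apply _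
    have hT : ∀ m : ℕ, Measurable fun (v : Fin (m+1) → Fin n → 𝒳) (i : Fin (m+1)) => ℓ (v i) :=
      fun m => measurable_pi_lambda _ fun i => hℓmeas.comp (measurable_pi_apply i)
    have hB : ∀ m : ℕ, MeasurableSet (Prod.mk (fun i => ℓ (y i)) ⁻¹' Stmt7.noCross Eb ν m) :=
      fun m => (Stmt7.measurableSet_noCross Eb ν m).preimage measurable_prodMk_left
    have hAeq : ∀ m : ℕ, A m = (fun (z : ℕ → Fin n → 𝒳) (i : Fin (m+1)) => z (i : ℕ)) ⁻¹'
        ((fun (v : Fin (m+1) → Fin n → 𝒳) (i : Fin (m+1)) => ℓ (v i)) ⁻¹'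
          (Prod.mk (fun i => ℓ (y i)) ⁻¹' Stmt7.noCross Eb ν m)) := by
      intro m; ext z; exact hev m z
    have hAmeas : ∀ m, MeasurableSet (A m) := fun m => by
      rw [hAeq m]; exact (hproj m) ((hT m) (hB m))
    calc (∫⁻ z, (ENat.toENNReal (τstar b (splice ν y z) - (ν : ℕ∞))) ∂(PP μs))
        = ∫⁻ z, ∑' m : ℕ, (A m).indicator (fun _ => (1:ℝ≥0∞)) z ∂(PP μs) := by
          refine lintegral_congr fun z => ?_
          rw [Stmt7.toENNReal_eq_tsum]
          refine tsum_congr fun m => ?_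
          rw [Set.indicator_apply]
          exact if_congr Iff.rfl rfl rfl
      _ = ∑' m : ℕ, ∫⁻ z, (A m).indicator (fun _ => (1:ℝ≥0∞)) z ∂(PP μs) :=
          lintegral_tsum fun m => (measurable_const.indicator (hAmeas m)).aemeasurable
      _ = ∑' m : ℕ, PP μs (A m) := tsum_congr fun m => lintegral_indicator_one (hAmeas m)
      _ = ∑' m : ℕ, Measure.pi (fun i : Fin (m+1) => Measure.map ℓ (μs (i : ℕ)))
            (Prod.mk (fun i => ℓ (y i)) ⁻¹' Stmt7.noCross Eb ν m) := by
          refine tsum_congr fun m => ?_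
          haveI : ∀ i : Fin (m+1), IsProbabilityMeasure (μs (i : ℕ)) := fun i => hμ _
          rw [hAeq m, ← Measure.map_apply (hproj m) ((hT m) (hB m)), hPP μs hμ (m+1),
            ← Measure.map_apply (hT m) (hB m), Stmt7.map_pi_comp _ hℓmeas]
  -- uniform version
  have hEQ : ∀ (ν : ℕ) (μs : ℕ → Measure (Fin n → 𝒳)),
      (∀ s, IsProbabilityMeasure (μs s)) → ∀ (κ : Measure ℝ≥0∞),
      (∀ s, Measure.map ℓ (μs s) = κ) → ∀ (y : Fin ν → Fin n → 𝒳),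
      (∫⁻ z, (ENat.toENNReal (τstar b (splice ν y z) - (ν : ℕ∞))) ∂(PP μs))
        = Stmt7.Hfun Eb κ ν (fun i => ℓ (y i)) := by
    intro ν μs hμ κ hmap y
    rw [MAIN ν μs hμ y]
    exact tsum_congr fun m => by
      rw [show (fun i : Fin (m+1) => Measure.map ℓ (μs (i : ℕ))) = fun _ : Fin (m+1) => κ
        from funext fun i => hmap _]
  -- the essSup terms agree
  have hWADDterm : ∀ (ν : ℕ) (Ω : ℕ → Fin n → Fin K), (∀ t, Ω t ∈ Slam) →
      essSup (fun y : Fin ν → (Fin n → 𝒳) =>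
          ∫⁻ z, ENat.toENNReal (τstar b (splice ν y z) - (ν : ℕ∞))
            ∂(PP (fun s => Pm true (Ω (ν + s)))))
        (Measure.pi (fun i : Fin ν => Pm false (Ω (i : ℕ))))
      = essSup (fun y : Fin ν → (Fin n → 𝒳) =>
          ∫⁻ z, ENat.toENNReal (τstar b (splice ν y z) - (ν : ℕ∞))
            ∂(PP (fun _ => Pt true)))
        (Measure.pi (fun _ : Fin ν => Pt false)) := by
    intro ν Ω hΩ
    haveI := hPtprob true
    haveI := hPtprob false
    haveI : IsProbabilityMeasure (Measure.map ℓ (Pt true)) :=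
      Measure.isProbabilityMeasure_map hℓmeas.aemeasurable
    have h1 : (fun y : Fin ν → (Fin n → 𝒳) =>
          ∫⁻ z, ENat.toENNReal (τstar b (splice ν y z) - (ν : ℕ∞))
            ∂(PP (fun s => Pm true (Ω (ν + s)))))
        = (Stmt7.Hfun Eb (Measure.map ℓ (Pt true)) ν) ∘ (fun y (i : Fin ν) => ℓ (y i)) :=
      funext fun y => hEQ ν _ (fun s => hPmprob true _) _
        (fun s => (hmapPt true _ (hΩ (ν + s))).symm) y
    have h2 : (fun y : Fin ν → (Fin n → 𝒳) =>
          ∫⁻ z, ENat.toENNReal (τstar b (splice ν y z) - (ν : ℕ∞))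
            ∂(PP (fun _ => Pt true)))
        = (Stmt7.Hfun Eb (Measure.map ℓ (Pt true)) ν) ∘ (fun y (i : Fin ν) => ℓ (y i)) :=
      funext fun y => hEQ ν _ (fun _ => hPtprob true) _ (fun _ => rfl) y
    rw [h1, h2]
    have hTy : Measurable fun (y : Fin ν → Fin n → 𝒳) (i : Fin ν) => ℓ (y i) :=
      measurable_pi_lambda _ fun i => hℓmeas.comp (measurable_pi_apply i)
    have hH : Measurable (Stmt7.Hfun Eb (Measure.map ℓ (Pt true)) ν) :=
      Stmt7.measurable_Hfun _ _ ν
    haveI : ∀ i : Fin ν, IsProbabilityMeasure (Pm false (Ω (i : ℕ))) :=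
      fun i => hPmprob false _
    haveI : ∀ i : Fin ν, IsProbabilityMeasure ((fun _ : Fin ν => Pt false) i) :=
      fun i => hPtprob false
    have hfam : (fun i : Fin ν => Measure.map ℓ (Pm false (Ω (i : ℕ))))
        = fun _ : Fin ν => Measure.map ℓ (Pt false) :=
      funext fun i => (hmapPt false _ (hΩ i)).symm
    calc essSup ((Stmt7.Hfun Eb (Measure.map ℓ (Pt true)) ν) ∘ (fun y (i : Fin ν) => ℓ (y i)))
          (Measure.pi (fun i : Fin ν => Pm false (Ω (i : ℕ))))
        = essSup (Stmt7.Hfun Eb (Measure.map ℓ (Pt true)) ν)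
            (Measure.map (fun y (i : Fin ν) => ℓ (y i))
              (Measure.pi (fun i : Fin ν => Pm false (Ω (i : ℕ))))) :=
          (essSup_map_measure_of_measurable hH hTy.aemeasurable).symm
      _ = essSup (Stmt7.Hfun Eb (Measure.map ℓ (Pt true)) ν)
            (Measure.pi (fun i : Fin ν => Measure.map ℓ (Pm false (Ω (i : ℕ))))) := by
          rw [Stmt7.map_pi_comp _ hℓmeas]
      _ = essSup (Stmt7.Hfun Eb (Measure.map ℓ (Pt true)) ν)
            (Measure.pi (fun i : Fin ν => Measure.map ℓ ((fun _ : Fin ν => Pt false) i))) := by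
          rw [hfam]
      _ = essSup (Stmt7.Hfun Eb (Measure.map ℓ (Pt true)) ν)
            (Measure.map (fun y (i : Fin ν) => ℓ (y i))
              (Measure.pi (fun _ : Fin ν => Pt false))) := by
          rw [Stmt7.map_pi_comp _ hℓmeas]
      _ = essSup ((Stmt7.Hfun Eb (Measure.map ℓ (Pt true)) ν) ∘ (fun y (i : Fin ν) => ℓ (y i)))
            (Measure.pi (fun _ : Fin ν => Pt false)) :=
          essSup_map_measure_of_measurable hH hTy.aemeasurable
  -- the ARL terms agree
  have hy0 : ∀ (y : Fin 0 → Fin n → 𝒳) (z : ℕ → Fin n → 𝒳), splice 0 y z = z := by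
    intro y z; funext t; rw [hsplice]; simp
  have hARLconst : ∀ (μs : ℕ → Measure (Fin n → 𝒳)),
      (∀ s, IsProbabilityMeasure (μs s)) →
      (∀ s, Measure.map ℓ (μs s) = Measure.map ℓ (Pt false)) →
      (∫⁻ ω, ENat.toENNReal (τstar b ω) ∂(PP μs))
        = Stmt7.Hfun Eb (Measure.map ℓ (Pt false)) 0
            (fun i => ℓ ((fun j : Fin 0 => (j.elim0 : Fin n → 𝒳)) i)) := by
    intro μs hμ hmap
    have hstep : (∫⁻ ω, ENat.toENNReal (τstar b ω) ∂(PP μs))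
        = ∫⁻ z, ENat.toENNReal (τstar b (splice 0 (fun j : Fin 0 => j.elim0) z)
            - ((0 : ℕ) : ℕ∞)) ∂(PP μs) := by
      refine lintegral_congr fun z => ?_
      rw [hy0 (fun j : Fin 0 => j.elim0) z, Nat.cast_zero, tsub_zero]
    rw [hstep]
    exact hEQ 0 μs hμ _ hmap (fun j : Fin 0 => j.elim0)
  have hA : ∀ (Ω : ℕ → Fin n → Fin K), (∀ t, Ω t ∈ Slam) →
      (∫⁻ ω, ENat.toENNReal (τstar b ω) ∂(PP (fun t => Pm false (Ω t))))
        = ∫⁻ ω, ENat.toENNReal (τstar b ω) ∂(PP (fun _ => Pt false)) := by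
    intro Ω hΩ
    rw [hARLconst (fun t => Pm false (Ω t)) (fun t => hPmprob false _)
        (fun t => (hmapPt false _ (hΩ t)).symm),
      hARLconst (fun _ => Pt false) (fun _ => hPtprob false) (fun _ => rfl)]
  constructor
  · rw [hWADD, hWADDt]
    apply le_antisymm
    · refine iSup_le fun ν => iSup_le fun Ω => iSup_le fun hΩ => ?_
      rw [hWADDterm ν Ω hΩ]
      exact le_iSup (fun ν : ℕ => essSup (fun y : Fin ν → (Fin n → 𝒳) =>
          ∫⁻ z, ENat.toENNReal (τstar b (splice ν y z) - (ν : ℕ∞))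
            ∂(PP (fun _ => Pt true)))
        (Measure.pi (fun _ : Fin ν => Pt false))) ν
    · refine iSup_le fun ν => ?_
      rw [← hWADDterm ν (fun _ => σ₀) (fun _ => hσ₀)]
      exact le_iSup_of_le ν (le_iSup_of_le (fun _ => σ₀) (le_iSup_of_le (fun _ => hσ₀) le_rfl))
  · rw [hWARL, hARLt]
    apply le_antisymm
    · exact iInf_le_of_le (fun _ => σ₀)
        (iInf_le_of_le (fun _ => hσ₀) (le_of_eq (hA _ (fun _ => hσ₀))))
    · exact le_iInf fun Ω => le_iInf fun hΩ => le_of_eq (hA Ω hΩ).symm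
end

section
/- Suppose 𝒳 is a finite alphabet and each p_{θ,k} assigns positive probability to every element of 𝒳. Then for every x^n ∈ 𝒳^n and every fixed σ ∈ S_{n,λ}, the mixture likelihood ratio equals the type-class probability ratio: (Σ_{σ'∈S_{n,λ}} ℙ_{1,σ'}({x^n})) / (Σ_{σ'∈S_{n,λ}} ℙ_{0,σ'}({x^n})) = ℙ_{1,σ}(T(Π_{x^n})) / ℙ_{0,σ}(T(Π_{x^n})), where Π_{x^n} is the empirical distribution of x^n and T(Π_{x^n}) ⊆ 𝒳^n is its type class (the set of sequences with the same empirical distribution as x^n). -/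
/-!
Both sides are sums over the symmetric group in disguise. Summing the likelihood of `x` over
all relabelings `σ ∘ π` visits every labeling of `Slam` equally often, and summing the
likelihood under `σ` over all rearrangements `x ∘ π` visits every sequence of the type class
of `x` equally often. Since the product likelihood is invariant under permuting labels and
observations simultaneously, the two permutation sums agree, so each numerator and
denominator on the left is a fixed positive multiple (a ratio of stabilizer sizes) of the
corresponding one on the right, and the multiples cancel in the ratio.
-/

open Finset Equiv

theorem sum_perm_prod_comp_left_eq_sum_perm_prod_comp_right {ι κ α R : Type*} [Fintype ι]
    [DecidableEq ι] [CommSemiring R] (q : κ → α → R) (σ : ι → κ) (x : ι → α) :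
    ∑ π : Perm ι, ∏ i, q (σ (π i)) (x i)
      = ∑ π : Perm ι, ∏ i, q (σ i) (x (π i)) := by
  refine Fintype.sum_equiv (Equiv.inv (Perm ι)) _ _ fun π => ?_
  symm
  rw [← Equiv.prod_comp π]
  simp

section TypeClass

variable {ι α : Type*} [Fintype ι] [DecidableEq α]

theorem card_fiber_comp_perm (f : ι → α) (π : Perm ι) (a : α) :
    #{i | f (π i) = a} = #{i | f i = a} :=
  card_equiv π (by simp)

theorem exists_perm_comp_eq_of_card_fiber_eq {f y : ι → α}
    (h : ∀ a, #{i | y i = a} = #{i | f i = a}) : ∃ π : Perm ι, f ∘ π = y := by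
  have e (a : α) : {i // y i = a} ≃ {i // f i = a} :=
    Fintype.equivOfCardEq (by rw [Fintype.card_subtype, Fintype.card_subtype, h a])
  refine ⟨(sigmaFiberEquiv y).symm.trans ((sigmaCongrRight e).trans (sigmaFiberEquiv f)),
    funext fun i => ?_⟩
  exact (e (y i) ⟨i, rfl⟩).2

variable [DecidableEq ι]

def typeClass [Fintype α] (f : ι → α) : Finset (ι → α) :=
  {y | ∀ a, #{i | y i = a} = #{i | f i = a}}

theorem mem_typeClass_iff [Fintype α] {f y : ι → α} :
    y ∈ typeClass f ↔ ∃ π : Perm ι, f ∘ π = y := by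
  simp only [typeClass, mem_filter, mem_univ, true_and]
  refine ⟨exists_perm_comp_eq_of_card_fiber_eq, ?_⟩
  rintro ⟨π, rfl⟩ a
  exact card_fiber_comp_perm f π a

theorem card_perm_comp_eq_comp_perm (f : ι → α) (τ : Perm ι) :
    #{π : Perm ι | f ∘ π = f ∘ τ} = #{π : Perm ι | f ∘ π = f} := by
  refine card_equiv (Equiv.mulRight τ⁻¹) fun π => ?_
  simp only [mem_filter, mem_univ, true_and, coe_mulRight, funext_iff, Function.comp_apply,
    Perm.mul_apply]
  rw [← τ.forall_congr_right (q := fun j => f (π (τ⁻¹ j)) = f j)]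
  simp

theorem sum_perm_comp_eq_card_nsmul_sum_typeClass [Fintype α] {M : Type*} [AddCommMonoid M]
    (f : ι → α) (g : (ι → α) → M) :
    ∑ π : Perm ι, g (f ∘ π)
      = #{π : Perm ι | f ∘ π = f} • ∑ y ∈ typeClass f, g y := by
  have himage : univ.image (fun π : Perm ι => f ∘ π) = typeClass f := by
    ext y
    simp [mem_typeClass_iff]
  rw [Finset.sum_comp, himage, smul_sum]
  refine sum_congr rfl fun y hy => ?_
  obtain ⟨τ, rfl⟩ := mem_typeClass_iff.1 hy
  rw [card_perm_comp_eq_comp_perm]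

theorem card_stabilizer_mul_sum_typeClass_eq [Fintype α] {κ R : Type*} [Fintype κ]
    [DecidableEq κ] [CommSemiring R] (q : κ → α → R) (σ : ι → κ) (x : ι → α) :
    #{π : Perm ι | σ ∘ π = σ} • ∑ σ' ∈ typeClass σ, ∏ i, q (σ' i) (x i)
      = #{π : Perm ι | x ∘ π = x} • ∑ y ∈ typeClass x, ∏ i, q (σ i) (y i) := by
  rw [← sum_perm_comp_eq_card_nsmul_sum_typeClass σ (fun σ' => ∏ i, q (σ' i) (x i)),
    ← sum_perm_comp_eq_card_nsmul_sum_typeClass x (fun y => ∏ i, q (σ i) (y i))]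
  exact sum_perm_prod_comp_left_eq_sum_perm_prod_comp_right q σ x

end TypeClass

theorem stmt_8_general {𝒳 : Type*} [Fintype 𝒳] [DecidableEq 𝒳]
    (n K : ℕ) (nk : Fin K → ℕ)
    (p : Bool → Fin K → 𝒳 → ℝ)
    (Slam : Finset (Fin n → Fin K))
    (hSlam : Slam = Finset.univ.filter
      (fun σ => ∀ k, (Finset.univ.filter (fun i => σ i = k)).card = nk k))
    (x : Fin n → 𝒳) (σ : Fin n → Fin K) (hσ : σ ∈ Slam)
    (T : Finset (Fin n → 𝒳))
    (hT : T = Finset.univ.filter (fun y : Fin n → 𝒳 => ∀ a : 𝒳,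
      (Finset.univ.filter (fun i => y i = a)).card
        = (Finset.univ.filter (fun i => x i = a)).card)) :
    (∑ σ' ∈ Slam, ∏ i, p true (σ' i) (x i)) / (∑ σ' ∈ Slam, ∏ i, p false (σ' i) (x i))
      = (∑ y ∈ T, ∏ i, p true (σ i) (y i)) / (∑ y ∈ T, ∏ i, p false (σ i) (y i)) := by
  have hSlam_eq : Slam = typeClass σ := by
    have hσk : ∀ k, #{i | σ i = k} = nk k := by simpa [hSlam] using hσ
    simp only [hSlam, typeClass, hσk]
  obtain rfl : T = typeClass x := hT
  subst hSlam_eq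
  set c := #{π : Perm (Fin n) | σ ∘ π = σ}
  set d := #{π : Perm (Fin n) | x ∘ π = x}
  have hc : (c : ℝ) ≠ 0 := Nat.cast_ne_zero.2 (card_ne_zero.2 ⟨1, by simp⟩)
  have hd : (d : ℝ) ≠ 0 := Nat.cast_ne_zero.2 (card_ne_zero.2 ⟨1, by simp⟩)
  have key θ := card_stabilizer_mul_sum_typeClass_eq (p θ) σ x
  simp only [nsmul_eq_mul] at key
  calc _ = (c * ∑ σ' ∈ typeClass σ, ∏ i, p true (σ' i) (x i))
          / (c * ∑ σ' ∈ typeClass σ, ∏ i, p false (σ' i) (x i)) :=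
        (mul_div_mul_left _ _ hc).symm
    _ = (d * ∑ y ∈ typeClass x, ∏ i, p true (σ i) (y i))
          / (d * ∑ y ∈ typeClass x, ∏ i, p false (σ i) (y i)) := by rw [key, key]
    _ = _ := mul_div_mul_left _ _ hd

/-- On a finite alphabet with full-support distributions, the mixture
likelihood ratio equals the type-class probability ratio: for every sample `x : Fin n → 𝒳`
and every fixed labeling `σ ∈ Slam`,
`(∑_{σ'∈Slam} ℙ_{1,σ'}{x}) / (∑_{σ'∈Slam} ℙ_{0,σ'}{x})
  = ℙ_{1,σ}(T(Π_x)) / ℙ_{0,σ}(T(Π_x))`,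
where `T(Π_x)` is the set of sequences with the same empirical distribution as `x`. -/
theorem stmt_8 {𝒳 : Type*} [Fintype 𝒳] [DecidableEq 𝒳]
    (n K : ℕ) (nk : Fin K → ℕ) (hn : ∑ k, nk k = n)
    (p : Bool → Fin K → 𝒳 → ℝ)
    (hp : ∀ θ k, (∀ x, 0 < p θ k x) ∧ ∑ x, p θ k x = 1)
    (Slam : Finset (Fin n → Fin K))
    (hSlam : Slam = Finset.univ.filter
      (fun σ => ∀ k, (Finset.univ.filter (fun i => σ i = k)).card = nk k))
    (x : Fin n → 𝒳) (σ : Fin n → Fin K) (hσ : σ ∈ Slam)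
    (T : Finset (Fin n → 𝒳))
    (hT : T = Finset.univ.filter (fun y : Fin n → 𝒳 => ∀ a : 𝒳,
      (Finset.univ.filter (fun i => y i = a)).card
        = (Finset.univ.filter (fun i => x i = a)).card)) :
    (∑ σ' ∈ Slam, ∏ i, p true (σ' i) (x i)) / (∑ σ' ∈ Slam, ∏ i, p false (σ' i) (x i))
      = (∑ y ∈ T, ∏ i, p true (σ i) (y i)) / (∑ y ∈ T, ∏ i, p false (σ i) (y i)) :=
  stmt_8_general n K nk p Slam hSlam x σ hσ T hT
end

section
/- Suppose 𝒳 is a finite alphabet, α = (α_1,…,α_K) satisfies α_k > 0 and Σ_k α_k = 1, and P = (P_1,…,P_K) is a tuple of probability distributions on 𝒳 each of which has full support (P_k(x) > 0 for all x ∈ 𝒳). Then the map Q ↦ f_P(α,Q) is continuous on 𝒫_𝒳 (with 𝒫_𝒳 topologized as a subset of ℝ^{𝒳}). -/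
open scoped ENNReal

/-- Kullback–Leibler divergence `D(U‖P)` between two probability vectors on a finite
alphabet, with value `∞` when `U` is not absolutely continuous with respect to `P`. -/
noncomputable def klD {𝒳 : Type*} [Fintype 𝒳] (U P : 𝒳 → ℝ) : ℝ≥0∞ := by
  classical
  exact if (∀ x, P x = 0 → U x = 0)
    then ENNReal.ofReal (∑ x, U x * Real.log (U x / P x)) else ⊤

/-- `f_P(α, Q) = inf { ∑_k α_k D(U_k‖P_k) : U_k probability vectors, ∑_k α_k U_k = Q }`. -/
noncomputable def fP {𝒳 : Type*} [Fintype 𝒳] {K : ℕ} (α : Fin K → ℝ)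
    (P : Fin K → 𝒳 → ℝ) (Q : 𝒳 → ℝ) : ℝ≥0∞ :=
  ⨅ (U : Fin K → 𝒳 → ℝ) (_ : (∀ k, (∀ x, 0 ≤ U k x) ∧ ∑ x, U k x = 1)
      ∧ ∀ x, ∑ k, α k * U k x = Q x),
    ∑ k, ENNReal.ofReal (α k) * klD (U k) (P k)

/-- Feasible set for the minimization defining `fP`. -/
def Feas {𝒳 : Type*} [Fintype 𝒳] {K : ℕ} (α : Fin K → ℝ) (Q : 𝒳 → ℝ) :
    Set (Fin K → 𝒳 → ℝ) :=
  {U | (∀ k, (∀ x, 0 ≤ U k x) ∧ ∑ x, U k x = 1) ∧ ∀ x, ∑ k, α k * U k x = Q x}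

/-- Real-valued version of the cost. -/
noncomputable def cC {𝒳 : Type*} [Fintype 𝒳] {K : ℕ} (α : Fin K → ℝ)
    (P : Fin K → 𝒳 → ℝ) (U : Fin K → 𝒳 → ℝ) : ℝ :=
  ∑ k, α k * max (∑ x, U k x * Real.log (U k x / P k x)) 0

/-- Real-valued version of `fP`. -/
noncomputable def gg {𝒳 : Type*} [Fintype 𝒳] {K : ℕ} (α : Fin K → ℝ)
    (P : Fin K → 𝒳 → ℝ) (Q : 𝒳 → ℝ) : ℝ :=
  sInf (cC α P '' Feas α Q)

lemma cC_nonneg {𝒳 : Type*} [Fintype 𝒳] {K : ℕ} {α : Fin K → ℝ} (hα : ∀ k, 0 < α k)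
    (P : Fin K → 𝒳 → ℝ) (U : Fin K → 𝒳 → ℝ) : 0 ≤ cC α P U :=
  Finset.sum_nonneg fun k _ => mul_nonneg (hα k).le (le_max_right _ _)

lemma cC_cont {𝒳 : Type*} [Fintype 𝒳] {K : ℕ} (α : Fin K → ℝ)
    {P : Fin K → 𝒳 → ℝ} (hP : ∀ k x, 0 < P k x) : Continuous (cC α P) := by
  unfold cC
  apply continuous_finset_sum
  intro k _
  apply Continuous.mul continuous_const
  apply Continuous.max _ continuous_const
  apply continuous_finset_sum
  intro x _
  have h : ∀ U : Fin K → 𝒳 → ℝ, U k x * Real.log (U k x / P k x)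
      = U k x * Real.log (U k x) - U k x * Real.log (P k x) := by
    intro U
    by_cases h : U k x = 0
    · simp [h]
    · rw [Real.log_div h (hP k x).ne', mul_sub]
  simp only [h]
  have he : Continuous fun U : Fin K → 𝒳 → ℝ => U k x :=
    (continuous_apply x).comp (continuous_apply k)
  exact (Real.continuous_mul_log.comp he).sub (he.mul continuous_const)

lemma cost_eq {𝒳 : Type*} [Fintype 𝒳] {K : ℕ} {α : Fin K → ℝ} (hα : ∀ k, 0 < α k)
    {P : Fin K → 𝒳 → ℝ} (hP : ∀ k x, 0 < P k x) (U : Fin K → 𝒳 → ℝ) :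
    ∑ k, ENNReal.ofReal (α k) * klD (U k) (P k) = ENNReal.ofReal (cC α P U) := by
  unfold cC
  rw [ENNReal.ofReal_sum_of_nonneg (fun k _ => mul_nonneg (hα k).le (le_max_right _ _))]
  apply Finset.sum_congr rfl
  intro k _
  have hcond : ∀ x, P k x = 0 → U k x = 0 := fun x h => absurd h (hP k x).ne'
  have hklD : klD (U k) (P k)
      = ENNReal.ofReal (∑ x, U k x * Real.log (U k x / P k x)) := by
    simp only [klD]; rw [if_pos hcond]
  rw [hklD, ← ENNReal.ofReal_mul (hα k).le]
  rcases le_total (∑ x, U k x * Real.log (U k x / P k x)) 0 with h | h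
  · rw [max_eq_right h, mul_zero, ENNReal.ofReal_zero,
      ENNReal.ofReal_eq_zero]
    exact mul_nonpos_of_nonneg_of_nonpos (hα k).le h
  · rw [max_eq_left h]

lemma feas_const {𝒳 : Type*} [Fintype 𝒳] {K : ℕ} {α : Fin K → ℝ}
    (hαsum : ∑ k, α k = 1) {Q : 𝒳 → ℝ} (hQ0 : ∀ x, 0 ≤ Q x) (hQ1 : ∑ x, Q x = 1) :
    (fun _ => Q) ∈ Feas α Q := by
  refine ⟨fun k => ⟨hQ0, hQ1⟩, fun x => ?_⟩
  rw [← Finset.sum_mul, hαsum, one_mul]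

lemma fP_eq_gg {𝒳 : Type*} [Fintype 𝒳] {K : ℕ} {α : Fin K → ℝ} (hα : ∀ k, 0 < α k)
    (hαsum : ∑ k, α k = 1) {P : Fin K → 𝒳 → ℝ} (hP : ∀ k x, 0 < P k x)
    {Q : 𝒳 → ℝ} (hQ0 : ∀ x, 0 ≤ Q x) (hQ1 : ∑ x, Q x = 1) :
    fP α P Q = ENNReal.ofReal (gg α P Q) := by
  have hbdd : BddBelow (cC α P '' Feas α Q) := by
    refine ⟨0, fun y hy => ?_⟩
    obtain ⟨U, _, rfl⟩ := hy
    exact cC_nonneg hα P U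
  have himne : (cC α P '' Feas α Q).Nonempty :=
    ⟨_, Set.mem_image_of_mem _ (feas_const hαsum hQ0 hQ1)⟩
  have hgg0 : 0 ≤ gg α P Q := le_csInf himne (fun y hy => by
    obtain ⟨U, _, rfl⟩ := hy; exact cC_nonneg hα P U)
  apply le_antisymm
  · apply ENNReal.le_of_forall_pos_le_add
    intro ε hε _
    have hεpos : (0:ℝ) < ε := hε
    obtain ⟨y, hy, hylt⟩ := exists_lt_of_csInf_lt himne
      (lt_add_of_pos_right (gg α P Q) hεpos)
    obtain ⟨U, hUF, rfl⟩ := hy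
    calc fP α P Q ≤ ∑ k, ENNReal.ofReal (α k) * klD (U k) (P k) := iInf₂_le U hUF
      _ = ENNReal.ofReal (cC α P U) := cost_eq hα hP U
      _ ≤ ENNReal.ofReal (gg α P Q + ε) := ENNReal.ofReal_le_ofReal hylt.le
      _ = ENNReal.ofReal (gg α P Q) + ENNReal.ofReal ε :=
          ENNReal.ofReal_add hgg0 ε.2
      _ = ENNReal.ofReal (gg α P Q) + ε := by rw [ENNReal.ofReal_coe_nnreal]
  · apply le_iInf₂
    intro U hUF
    rw [cost_eq hα hP U]
    exact ENNReal.ofReal_le_ofReal (csInf_le hbdd (Set.mem_image_of_mem _ hUF))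


lemma feas_def {𝒳 : Type*} [Fintype 𝒳] {K : ℕ} (α : Fin K → ℝ) (Q : 𝒳 → ℝ) :
    Feas α Q =
      {U | (∀ k, (∀ x, 0 ≤ U k x) ∧ ∑ x, U k x = 1) ∧ ∀ x, ∑ k, α k * U k x = Q x} :=
  rfl

lemma perturb {𝒳 : Type*} [Fintype 𝒳] {K : ℕ} {α : Fin K → ℝ} (hα : ∀ k, 0 < α k)
    {Q Q' : 𝒳 → ℝ} (hQ0 : ∀ x, 0 ≤ Q x) (hQ1 : ∑ x, Q x = 1)
    (hQ'0 : ∀ x, 0 ≤ Q' x) (hQ'1 : ∑ x, Q' x = 1)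
    {U : Fin K → 𝒳 → ℝ} (hU : U ∈ Feas α Q) :
    ∃ U' ∈ Feas α Q', ∀ k x, |U' k x - U k x| ≤ |Q x - Q' x| / α k := by
  classical
  obtain ⟨hUp, hUc⟩ := hU
  set dm : 𝒳 → ℝ := fun x => max (Q x - Q' x) 0 with hdm
  set dp : 𝒳 → ℝ := fun x => max (Q' x - Q x) 0 with hdp
  have hdm0 : ∀ x, 0 ≤ dm x := fun x => le_max_right _ _
  have hdp0 : ∀ x, 0 ≤ dp x := fun x => le_max_right _ _
  have hdmQ : ∀ x, dm x ≤ Q x := fun x => max_le (by linarith [hQ'0 x]) (hQ0 x)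
  have hdiff : ∀ x, dp x - dm x = Q' x - Q x := by
    intro x
    simp only [hdp, hdm]
    rcases le_total (Q x) (Q' x) with h | h
    · rw [max_eq_left (show (0:ℝ) ≤ Q' x - Q x by linarith),
        max_eq_right (show Q x - Q' x ≤ (0:ℝ) by linarith)]
      ring
    · rw [max_eq_right (show Q' x - Q x ≤ (0:ℝ) by linarith),
        max_eq_left (show (0:ℝ) ≤ Q x - Q' x by linarith)]
      ring
  have habs : ∀ x, dm x + dp x = |Q x - Q' x| := by
    intro x
    simp only [hdp, hdm]
    rcases le_total (Q x) (Q' x) with h | h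
    · rw [max_eq_left (show (0:ℝ) ≤ Q' x - Q x by linarith),
        max_eq_right (show Q x - Q' x ≤ (0:ℝ) by linarith),
        abs_of_nonpos (show Q x - Q' x ≤ (0:ℝ) by linarith)]
      ring
    · rw [max_eq_right (show Q' x - Q x ≤ (0:ℝ) by linarith),
        max_eq_left (show (0:ℝ) ≤ Q x - Q' x by linarith),
        abs_of_nonneg (show (0:ℝ) ≤ Q x - Q' x by linarith)]
      ring
  set m : ℝ := ∑ x, dm x with hm
  have hm0 : 0 ≤ m := Finset.sum_nonneg fun x _ => hdm0 x
  have hmp : ∑ x, dp x = m := by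
    have h0 : ∑ x, (dp x - dm x) = 0 := by
      simp only [hdiff]
      rw [Finset.sum_sub_distrib, hQ'1, hQ1]; ring
    rw [Finset.sum_sub_distrib] at h0
    rw [hm]; linarith
  rcases eq_or_lt_of_le hm0 with hmz | hmpos
  · -- m = 0, so Q = Q'
    have hdmz : ∀ x, dm x = 0 := fun x =>
      (Finset.sum_eq_zero_iff_of_nonneg (fun x _ => hdm0 x)).mp hmz.symm x
        (Finset.mem_univ x)
    have hQQ : ∀ x, Q x = Q' x := by
      have hge : ∀ x ∈ Finset.univ, (0:ℝ) ≤ Q' x - Q x := by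
        intro x _
        have h1 := hdmz x
        have h2 : Q x - Q' x ≤ dm x := le_max_left _ _
        linarith
      have hsz : ∑ x, (Q' x - Q x) = 0 := by
        rw [Finset.sum_sub_distrib, hQ'1, hQ1]; ring
      intro x
      have := (Finset.sum_eq_zero_iff_of_nonneg hge).mp hsz x (Finset.mem_univ x)
      linarith
    refine ⟨U, ⟨hUp, fun x => (hQQ x) ▸ hUc x⟩, fun k x => ?_⟩
    simp only [sub_self, abs_zero]
    exact div_nonneg (abs_nonneg _) (hα k).le
  · -- main case : 0 < m
    set r : Fin K → 𝒳 → ℝ := fun k x => if Q x = 0 then 0 else U k x * (dm x / Q x)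
      with hr
    have hr0 : ∀ k x, 0 ≤ r k x := by
      intro k x
      simp only [hr]
      split
      · exact le_refl 0
      · exact mul_nonneg ((hUp k).1 x) (div_nonneg (hdm0 x) (hQ0 x))
    have hrU : ∀ k x, r k x ≤ U k x := by
      intro k x
      simp only [hr]
      split
      · exact (hUp k).1 x
      · rename_i h
        have hQpos : 0 < Q x := lt_of_le_of_ne (hQ0 x) (Ne.symm h)
        calc U k x * (dm x / Q x) ≤ U k x * 1 := by
              apply mul_le_mul_of_nonneg_left _ ((hUp k).1 x)
              rw [div_le_one hQpos]
              exact hdmQ x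
          _ = U k x := mul_one _
    have hQzdm : ∀ x, Q x = 0 → dm x = 0 := fun x h =>
      le_antisymm (h ▸ hdmQ x) (hdm0 x)
    have hsumr : ∀ x, ∑ k, α k * r k x = dm x := by
      intro x
      by_cases h : Q x = 0
      · simp only [hr, if_pos h, mul_zero]
        rw [Finset.sum_const_zero, hQzdm x h]
      · have hQpos : 0 < Q x := lt_of_le_of_ne (hQ0 x) (Ne.symm h)
        simp only [hr, if_neg h]
        have : ∑ k, α k * (U k x * (dm x / Q x))
            = (∑ k, α k * U k x) * (dm x / Q x) := by
          rw [Finset.sum_mul]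
          exact Finset.sum_congr rfl fun k _ => by ring
        rw [this, hUc x, mul_comm, div_mul_cancel₀ _ hQpos.ne']
    have hαUQ : ∀ k x, α k * U k x ≤ Q x := by
      intro k x
      rw [← hUc x]
      exact Finset.single_le_sum
        (fun j _ => mul_nonneg (hα j).le ((hUp j).1 x)) (Finset.mem_univ k)
    have hrdm : ∀ k x, α k * r k x ≤ dm x := by
      intro k x
      simp only [hr]
      split
      · simp [hdm0 x]
      · rename_i h
        have hQpos : 0 < Q x := lt_of_le_of_ne (hQ0 x) (Ne.symm h)
        calc α k * (U k x * (dm x / Q x)) = (α k * U k x) * (dm x / Q x) := by ring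
          _ ≤ Q x * (dm x / Q x) :=
            mul_le_mul_of_nonneg_right (hαUQ k x) (div_nonneg (hdm0 x) (hQ0 x))
          _ = dm x := by rw [mul_comm, div_mul_cancel₀ _ hQpos.ne']
    set mk : Fin K → ℝ := fun k => ∑ x, r k x with hmk
    have hmk0 : ∀ k, 0 ≤ mk k := fun k => Finset.sum_nonneg fun x _ => hr0 k x
    have hmkle : ∀ k, α k * mk k ≤ m := by
      intro k
      rw [hmk]
      simp only
      rw [Finset.mul_sum, hm]
      exact Finset.sum_le_sum fun x _ => hrdm k x
    have hsummk : ∑ k, α k * mk k = m := by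
      simp only [hmk, Finset.mul_sum]
      rw [Finset.sum_comm]
      rw [hm]
      exact Finset.sum_congr rfl fun x _ => hsumr x
    refine ⟨fun k x => U k x - r k x + mk k / m * dp x, ⟨fun k => ⟨fun x => ?_, ?_⟩,
      fun x => ?_⟩, fun k x => ?_⟩
    · have h1 := hrU k x
      have h2 : 0 ≤ mk k / m * dp x :=
        mul_nonneg (div_nonneg (hmk0 k) hm0) (hdp0 x)
      linarith
    · rw [Finset.sum_add_distrib, Finset.sum_sub_distrib, (hUp k).2,
        ← Finset.mul_sum, hmp, div_mul_cancel₀ _ hmpos.ne']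
      have : ∑ x, r k x = mk k := rfl
      rw [this]; ring
    · have hexp : ∑ k, α k * (U k x - r k x + mk k / m * dp x)
          = (∑ k, α k * U k x) - (∑ k, α k * r k x)
            + (∑ k, α k * mk k) * (dp x / m) := by
        rw [Finset.sum_mul, ← Finset.sum_sub_distrib, ← Finset.sum_add_distrib]
        exact Finset.sum_congr rfl fun k _ => by ring
      rw [hexp, hUc x, hsumr x, hsummk]
      have h1 : m * (dp x / m) = dp x := by
        rw [mul_comm, div_mul_cancel₀ _ hmpos.ne']
      rw [h1]
      have := hdiff x
      linarith
    · have hb1 : r k x ≤ (dm x + dp x) / α k := by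
        rw [le_div_iff₀ (hα k), mul_comm]
        have := hrdm k x
        linarith [hdp0 x]
      have hb2 : mk k / m * dp x ≤ (dm x + dp x) / α k := by
        have h1 : mk k / m * dp x ≤ 1 / α k * dp x := by
          apply mul_le_mul_of_nonneg_right _ (hdp0 x)
          rw [div_le_div_iff₀ hmpos (hα k)]
          have := hmkle k
          linarith [mul_comm (α k) (mk k)]
        calc mk k / m * dp x ≤ 1 / α k * dp x := h1
          _ = dp x / α k := by ring
          _ ≤ (dm x + dp x) / α k := by
            apply div_le_div_of_nonneg_right _ (hα k).le
            linarith [hdm0 x]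
      rw [← habs x]
      have hsimp : U k x - r k x + mk k / m * dp x - U k x
          = mk k / m * dp x - r k x := by ring
      rw [hsimp, abs_le]
      constructor
      · have : 0 ≤ mk k / m * dp x :=
          mul_nonneg (div_nonneg (hmk0 k) hm0) (hdp0 x)
        have hb1' := hb1
        linarith
      · have : 0 ≤ r k x := hr0 k x
        linarith


/-- Feasible vectors lie in the cube. -/
lemma feas_sub_cube {𝒳 : Type*} [Fintype 𝒳] {K : ℕ} {α : Fin K → ℝ} {Q : 𝒳 → ℝ} {U : Fin K → 𝒳 → ℝ}
    (hU : U ∈ Feas α Q) :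
    U ∈ Set.pi Set.univ (fun _ : Fin K =>
      Set.pi Set.univ (fun _ : 𝒳 => Set.Icc (0:ℝ) 1)) := by
  rw [feas_def] at hU
  intro k _
  intro x _
  refine ⟨(hU.1 k).1 x, ?_⟩
  calc U k x ≤ ∑ y, U k y :=
        Finset.single_le_sum (fun y _ => (hU.1 k).1 y) (Finset.mem_univ x)
    _ = 1 := (hU.1 k).2

lemma gg_continuousOn {𝒳 : Type*} [Fintype 𝒳] {K : ℕ} {α : Fin K → ℝ} (hα : ∀ k, 0 < α k)
    (hαsum : ∑ k, α k = 1) {P : Fin K → 𝒳 → ℝ} (hP : ∀ k x, 0 < P k x) :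
    ContinuousOn (gg α P) {Q : 𝒳 → ℝ | (∀ x, 0 ≤ Q x) ∧ ∑ x, Q x = 1} := by
  classical
  -- K is positive
  have hK : 0 < K := by
    by_contra h
    push_neg at h
    interval_cases K
    simp at hαsum
  haveI : Nonempty (Fin K) := ⟨⟨0, hK⟩⟩
  set a : ℝ := Finset.univ.inf' Finset.univ_nonempty α with ha
  have ha0 : 0 < a := by
    rw [ha, Finset.lt_inf'_iff]
    exact fun k _ => hα k
  have haα : ∀ k, a ≤ α k := fun k => Finset.inf'_le α (Finset.mem_univ k)
  -- compactness / uniform continuity setup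
  set B : Set (Fin K → 𝒳 → ℝ) := Set.pi Set.univ (fun _ : Fin K =>
      Set.pi Set.univ (fun _ : 𝒳 => Set.Icc (0:ℝ) 1)) with hB
  have hBcomp : IsCompact B :=
    isCompact_univ_pi fun _ => isCompact_univ_pi fun _ => isCompact_Icc
  have hUC := hBcomp.uniformContinuousOn_of_continuous
    ((cC_cont α hP).continuousOn)
  rw [Metric.uniformContinuousOn_iff] at hUC
  rw [Metric.continuousOn_iff]
  intro Q hQ ε hε
  obtain ⟨δ₀, hδ₀, hδ⟩ := hUC (ε/3) (by positivity)
  refine ⟨δ₀ * a, by positivity, ?_⟩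
  intro Q' hQ' hdist
  have key : ∀ Q1 Q2 : 𝒳 → ℝ, (∀ x, 0 ≤ Q1 x) → ∑ x, Q1 x = 1 →
      (∀ x, 0 ≤ Q2 x) → ∑ x, Q2 x = 1 → dist Q1 Q2 < δ₀ * a →
      gg α P Q1 ≤ gg α P Q2 + (ε/3 + ε/3) := by
    intro Q1 Q2 h10 h11 h20 h21 hd
    have hbdd : BddBelow (cC α P '' Feas α Q1) := by
      refine ⟨0, fun y hy => ?_⟩
      obtain ⟨V, _, rfl⟩ := hy
      exact cC_nonneg hα P V
    have himne : (cC α P '' Feas α Q2).Nonempty :=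
      ⟨_, Set.mem_image_of_mem _ (feas_const hαsum h20 h21)⟩
    obtain ⟨y, hy, hylt⟩ := exists_lt_of_csInf_lt himne
      (lt_add_of_pos_right (sInf (cC α P '' Feas α Q2)) (by positivity : (0:ℝ) < ε/3))
    obtain ⟨U, hUF, rfl⟩ := hy
    obtain ⟨U', hU'F, hbound⟩ := perturb hα h20 h21 h10 h11 hUF
    have hUB : U ∈ B := feas_sub_cube hUF
    have hU'B : U' ∈ B := feas_sub_cube hU'F
    have hdUU : dist U' U < δ₀ := by
      have hle : dist U' U ≤ dist Q2 Q1 / a := by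
        rw [dist_pi_le_iff (by positivity)]
        intro k
        rw [dist_pi_le_iff (by positivity)]
        intro x
        rw [Real.dist_eq]
        calc |U' k x - U k x| ≤ |Q2 x - Q1 x| / α k := hbound k x
          _ ≤ dist Q2 Q1 / a := by
            apply div_le_div₀ (dist_nonneg) _ ha0 (haα k)
            have h := dist_le_pi_dist Q2 Q1 x
            rwa [Real.dist_eq] at h
      calc dist U' U ≤ dist Q2 Q1 / a := hle
        _ < δ₀ := by
          rw [div_lt_iff₀ ha0, mul_comm δ₀ a, mul_comm a δ₀]
          rw [dist_comm]
          exact hd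
    have hcc := hδ U' hU'B U hUB hdUU
    rw [Real.dist_eq] at hcc
    have h1 : gg α P Q1 ≤ cC α P U' :=
      csInf_le hbdd (Set.mem_image_of_mem _ hU'F)
    have h2 : cC α P U' - cC α P U < ε/3 := (abs_sub_lt_iff.1 hcc).1
    have h3 : cC α P U < gg α P Q2 + ε/3 := hylt
    unfold gg at *
    linarith
  have h1 := key Q' Q hQ'.1 hQ'.2 hQ.1 hQ.2 hdist
  have h2 := key Q Q' hQ.1 hQ.2 hQ'.1 hQ'.2 (by rwa [dist_comm])
  rw [Real.dist_eq]
  rw [abs_sub_lt_iff]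
  constructor <;> linarith

/-- if each `P k` has full support then `Q ↦ f_P(α,Q)` is continuous on the
probability simplex `𝒫_𝒳 ⊆ ℝ^𝒳`. -/
theorem stmt_12 {𝒳 : Type*} [Fintype 𝒳] (K : ℕ)
    (α : Fin K → ℝ) (hα : ∀ k, 0 < α k) (hαsum : ∑ k, α k = 1)
    (P : Fin K → 𝒳 → ℝ) (hP : ∀ k, (∀ x, 0 < P k x) ∧ ∑ x, P k x = 1) :
    ContinuousOn (fun Q : 𝒳 → ℝ => fP α P Q)
      {Q : 𝒳 → ℝ | (∀ x, 0 ≤ Q x) ∧ ∑ x, Q x = 1} := by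
  have hPpos : ∀ k x, 0 < P k x := fun k x => (hP k).1 x
  apply ContinuousOn.congr
    (f := fun Q : 𝒳 → ℝ => ENNReal.ofReal (gg α P Q))
  · exact ENNReal.continuous_ofReal.comp_continuousOn
      (gg_continuousOn hα hαsum hPpos)
  · intro Q hQ
    exact fP_eq_gg hα hαsum hPpos hQ.1 hQ.2
end

section
/- Suppose 𝒳 is a finite alphabet. Fix m ≥ 1 and consider mn mutually independent samples collected over m time steps, where at each time step n_k samples are drawn from p_{0,k} for each k = 1,…,K (n_1+⋯+n_K = n); let Π denote the empirical distribution of all mn samples. Then for every set A ⊆ 𝒫_𝒳, the probability that Π ∈ A is at most (∏_{k=1}^K |𝒫_{m n_k}|) · exp( − inf{ Σ_{k=1}^K m n_k D(U_k‖p_{0,k}) : (U_1,…,U_K) ∈ 𝒫_{m n_1}×⋯×𝒫_{m n_K}, Σ_k (n_k/n) U_k ∈ A } ). -/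
/-!
Group the samples by their joint type `d k x`, the number of the `Nₖ = m nₖ` samples of source
`k` that equal `x`. On the fibre of `d` the likelihood is `∏ₖ ∏ₓ p₀ₖ(x)^{d k x}`, which is
`exp(-∑ₖ Nₖ D(Uₖ‖p₀ₖ))` times the likelihood of the same sample under the types
`Uₖ = d k / Nₖ` themselves (Gibbs' inequality makes the exponent nonnegative). Summed over the
fibre, the latter likelihoods give at most one, so each fibre has probability at most
`exp(-∑ₖ Nₖ D(Uₖ‖p₀ₖ)) ≤ exp(-I)`: the empirical distribution of the whole sample is the
mixture `∑ₖ (nₖ/n) Uₖ`, so every fibre meeting the event satisfies the constraint of the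
infimum. There are at most `∏ₖ |𝒫_{m nₖ}|` fibres.
-/

open scoped ENNReal

/-- The set `𝒫_m` of types (empirical distributions) on `𝒳` with denominator `m`. -/
def typeSet (𝒳 : Type*) [Fintype 𝒳] (m : ℕ) : Set (𝒳 → ℝ) :=
  {q | ∃ c : 𝒳 → ℕ, (∀ x, q x = (c x : ℝ) / m) ∧ ∑ x, c x = m}

open Finset Real InformationTheory

namespace Sanov

section SingleSource

variable {𝒳 : Type*} [Fintype 𝒳]

theorem sum_mul_log_div_nonneg {U p : 𝒳 → ℝ} (hU : ∀ x, 0 ≤ U x) (hp : ∀ x, 0 ≤ p x)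
    (hac : ∀ x, p x = 0 → U x = 0) (hsum : ∑ x, p x ≤ ∑ x, U x) :
    0 ≤ ∑ x, U x * log (U x / p x) := by
  have hsplit : ∀ x, U x * log (U x / p x) = p x * klFun (U x / p x) + (U x - p x) := by
    intro x
    rcases (hp x).eq_or_lt with h | h
    · simp [← h, hac x h.symm]
    · rw [klFun_apply]
      field_simp
      ring
  have hkl : 0 ≤ ∑ x, p x * klFun (U x / p x) :=
    sum_nonneg fun x _ => mul_nonneg (hp x) (klFun_nonneg (div_nonneg (hU x) (hp x)))
  rw [sum_congr rfl fun x _ => hsplit x, sum_add_distrib, sum_sub_distrib]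
  linarith

variable {p : 𝒳 → ℝ} {c : 𝒳 → ℕ} {N : ℕ}

theorem mul_sum_log_div_nonneg (hN : ∑ x, c x = N) (hp : ∀ x, 0 ≤ p x) (hp1 : ∑ x, p x ≤ 1)
    (hac : ∀ x, p x = 0 → c x = 0) :
    0 ≤ (N : ℝ) * ∑ x, (c x / N : ℝ) * log ((c x / N : ℝ) / p x) := by
  rcases N.eq_zero_or_pos with rfl | hNpos
  · simp
  refine mul_nonneg N.cast_nonneg (sum_mul_log_div_nonneg (fun x => by positivity) hp
    (fun x hx => by simp [hac x hx]) ?_)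
  rw [← sum_div, ← Nat.cast_sum, hN, div_self (by positivity)]
  exact hp1

theorem prod_pow_eq_exp_mul_prod_pow (hN : ∑ x, c x = N) (hp : ∀ x, 0 ≤ p x)
    (hac : ∀ x, p x = 0 → c x = 0) :
    ∏ x, p x ^ c x = exp (-((N : ℝ) * ∑ x, (c x / N : ℝ) * log ((c x / N : ℝ) / p x)))
      * ∏ x, (c x / N : ℝ) ^ c x := by
  rw [mul_sum, ← sum_neg_distrib, exp_sum, ← prod_mul_distrib]
  refine prod_congr rfl fun x _ => ?_
  rcases (c x).eq_zero_or_pos with h | h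
  · simp [h]
  have hpx : 0 < p x := (hp x).lt_of_ne' fun h0 => h.ne' (hac x h0)
  have hcN : c x ≤ N := hN ▸ single_le_sum (fun _ _ => Nat.zero_le _) (mem_univ x)
  have hN0 : (0 : ℝ) < N := by exact_mod_cast h.trans_le hcN
  have hU : 0 < (c x / N : ℝ) := by positivity
  rw [← mul_assoc, mul_div_cancel₀ _ (by positivity), ← mul_neg, exp_nat_mul, ← log_inv,
    exp_log (by positivity), ← mul_pow, inv_div, div_mul_cancel₀ _ hU.ne']

end SingleSource

section Labelled

variable {ι κ 𝒳 : Type*}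

def labelCount [Fintype ι] [DecidableEq κ] (σ : ι → κ) (k : κ) : ℕ := #{i | σ i = k}

def typeCount [Fintype ι] [DecidableEq κ] [DecidableEq 𝒳] (σ : ι → κ) (w : ι → 𝒳) (k : κ)
    (x : 𝒳) : ℕ :=
  #{i | σ i = k ∧ w i = x}

noncomputable def klCost [Fintype κ] [Fintype 𝒳] (N : κ → ℕ) (p : κ → 𝒳 → ℝ)
    (d : κ → 𝒳 → ℕ) : ℝ≥0∞ :=
  ∑ k, (N k : ℝ≥0∞) * klD (fun x => (d k x : ℝ) / N k) (p k)

theorem sum_typeCount_right [Fintype ι] [Fintype 𝒳] [DecidableEq κ] [DecidableEq 𝒳]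
    (σ : ι → κ) (w : ι → 𝒳) (k : κ) : ∑ x, typeCount σ w k x = labelCount σ k := by
  rw [labelCount, card_eq_sum_card_fiberwise (f := w) fun _ _ => mem_univ _]
  simp only [typeCount, filter_filter]

theorem sum_typeCount_left [Fintype ι] [Fintype κ] [DecidableEq κ] [DecidableEq 𝒳]
    (σ : ι → κ) (w : ι → 𝒳) (x : 𝒳) : ∑ k, typeCount σ w k x = #{i | w i = x} := by
  rw [card_eq_sum_card_fiberwise (f := σ) fun _ _ => mem_univ _]
  simp only [typeCount, filter_filter, and_comm]

theorem prod_eq_prod_pow_typeCount [Fintype ι] [Fintype κ] [Fintype 𝒳] [DecidableEq κ]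
    [DecidableEq 𝒳] {M : Type*} [CommMonoid M] (σ : ι → κ) (w : ι → 𝒳) (f : κ → 𝒳 → M) :
    ∏ i, f (σ i) (w i) = ∏ k, ∏ x, f k x ^ typeCount σ w k x := by
  rw [← prod_fiberwise' univ (fun i => (σ i, w i)) (fun kx => f kx.1 kx.2),
    Fintype.prod_prod_type]
  simp only [prod_const, typeCount, Prod.ext_iff]

theorem sum_prod_div_labelCount_eq_one [Fintype ι] [Fintype 𝒳] [DecidableEq ι] [DecidableEq κ]
    (σ : ι → κ) {d : κ → 𝒳 → ℕ} (hd : ∀ k, ∑ x, d k x = labelCount σ k) :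
    ∑ w : ι → 𝒳, ∏ i, (d (σ i) (w i) : ℝ) / labelCount σ (σ i) = 1 := by
  rw [← Fintype.prod_sum fun i x => (d (σ i) x : ℝ) / labelCount σ (σ i)]
  refine prod_eq_one fun i _ => ?_
  have hpos : 0 < labelCount σ (σ i) := card_pos.2 ⟨i, mem_filter.2 ⟨mem_univ i, rfl⟩⟩
  rw [← sum_div, ← Nat.cast_sum, hd, div_self (by positivity)]

theorem exp_neg_coe_ofReal {r : ℝ} (hr : 0 ≤ r) :
    EReal.exp (-((ENNReal.ofReal r : ℝ≥0∞) : EReal)) = ENNReal.ofReal (exp (-r)) := by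
  rw [EReal.coe_ennreal_ofReal, max_eq_left hr, ← EReal.coe_neg, EReal.exp_coe]

theorem ofReal_prod_le_exp_neg_klCost_mul [Fintype ι] [Fintype κ] [Fintype 𝒳] [DecidableEq κ]
    [DecidableEq 𝒳] {p : κ → 𝒳 → ℝ} (hp : ∀ k x, 0 ≤ p k x) (hp1 : ∀ k, ∑ x, p k x ≤ 1)
    (σ : ι → κ) (w : ι → 𝒳) :
    ENNReal.ofReal (∏ i, p (σ i) (w i)) ≤
      EReal.exp (-(klCost (labelCount σ) p (typeCount σ w) : EReal)) *
        ENNReal.ofReal (∏ i, (typeCount σ w (σ i) (w i) : ℝ) / labelCount σ (σ i)) := by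
  set d := typeCount σ w
  by_cases hac : ∀ k x, p k x = 0 → d k x = 0
  swap
  · push Not at hac
    obtain ⟨k, x, hpk, hdk⟩ := hac
    rw [prod_eq_prod_pow_typeCount σ w p,
      prod_eq_zero (mem_univ k) (prod_eq_zero (mem_univ x) (by rw [hpk, zero_pow hdk]))]
    simp
  set a : κ → ℝ := fun k => (labelCount σ k : ℝ) *
    ∑ x, (d k x / labelCount σ k : ℝ) * log ((d k x / labelCount σ k : ℝ) / p k x)
  have ha : ∀ k, 0 ≤ a k := fun k =>
    mul_sum_log_div_nonneg (sum_typeCount_right σ w k) (hp k) (hp1 k) (hac k)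
  have hcost : klCost (labelCount σ) p d = ENNReal.ofReal (∑ k, a k) := by
    rw [ENNReal.ofReal_sum_of_nonneg fun k _ => ha k]
    refine sum_congr rfl fun k _ => ?_
    rw [klD, if_pos fun x hx => by simp [hac k x hx], ← ENNReal.ofReal_natCast,
      ← ENNReal.ofReal_mul (Nat.cast_nonneg _)]
  have hprod : ∏ i, p (σ i) (w i) =
      exp (-∑ k, a k) * ∏ i, (d (σ i) (w i) : ℝ) / labelCount σ (σ i) := by
    rw [prod_eq_prod_pow_typeCount σ w p,
      prod_eq_prod_pow_typeCount σ w fun k x => (d k x : ℝ) / labelCount σ k,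
      ← sum_neg_distrib, exp_sum, ← prod_mul_distrib]
    exact prod_congr rfl fun k _ =>
      prod_pow_eq_exp_mul_prod_pow (sum_typeCount_right σ w k) (hp k) (hac k)
  rw [hcost, hprod, exp_neg_coe_ofReal (sum_nonneg fun k _ => ha k),
    ENNReal.ofReal_mul (exp_pos _).le]

theorem card_typeSet [Fintype 𝒳] [DecidableEq 𝒳] (N : ℕ) :
    Nat.card (typeSet 𝒳 N) = #(piAntidiag (univ : Finset 𝒳) N) := by
  have himage : typeSet 𝒳 N = (fun (c : 𝒳 → ℕ) x => (c x : ℝ) / N) ''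
      (piAntidiag (univ : Finset 𝒳) N : Set (𝒳 → ℕ)) := by
    ext q
    simp [typeSet, mem_piAntidiag, funext_iff, eq_comm, and_comm]
  rw [himage, Nat.card_image_of_injOn, Nat.card_coe_set_eq, Set.ncard_coe_finset]
  intro c hc c' hc' h
  funext x
  rcases N.eq_zero_or_pos with rfl | hN
  · simp only [mem_coe, mem_piAntidiag, sum_eq_zero_iff] at hc hc'
    rw [hc.1 x (mem_univ x), hc'.1 x (mem_univ x)]
  · exact_mod_cast (div_left_inj' (by positivity)).1 (congrFun h x)

theorem card_image_typeCount_le [Fintype ι] [Fintype κ] [Fintype 𝒳] [DecidableEq κ]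
    [DecidableEq 𝒳] (σ : ι → κ) (S : Finset (ι → 𝒳)) :
    #(S.image (typeCount σ)) ≤ ∏ k, Nat.card (typeSet 𝒳 (labelCount σ k)) := by
  have hsub : S.image (typeCount σ) ⊆
      Fintype.piFinset fun k => piAntidiag univ (labelCount σ k) := by
    intro d hd
    obtain ⟨w, -, rfl⟩ := mem_image.1 hd
    simp [mem_piAntidiag, sum_typeCount_right]
  simp only [card_typeSet, ← Fintype.card_piFinset]
  exact card_le_card hsub

theorem ofReal_sum_prod_le_card_mul_exp_neg [Fintype ι] [Fintype κ] [Fintype 𝒳] [DecidableEq κ]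
    [DecidableEq 𝒳] {p : κ → 𝒳 → ℝ} (hp : ∀ k x, 0 ≤ p k x) (hp1 : ∀ k, ∑ x, p k x ≤ 1)
    (σ : ι → κ) (S : Finset (ι → 𝒳)) (J : ℝ≥0∞)
    (hJ : ∀ w ∈ S, J ≤ klCost (labelCount σ) p (typeCount σ w)) :
    ENNReal.ofReal (∑ w ∈ S, ∏ i, p (σ i) (w i)) ≤
      (∏ k, (Nat.card (typeSet 𝒳 (labelCount σ k)) : ℝ≥0∞)) * EReal.exp (-(J : EReal)) := by
  classical
  set Q : (κ → 𝒳 → ℕ) → (ι → 𝒳) → ℝ≥0∞ := fun d w =>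
    ENNReal.ofReal (∏ i, (d (σ i) (w i) : ℝ) / labelCount σ (σ i))
  have hfiber : ∀ d ∈ S.image (typeCount σ), ∑ w ∈ S with typeCount σ w = d, Q d w ≤ 1 := by
    intro d hd
    obtain ⟨w₀, -, rfl⟩ := mem_image.1 hd
    calc ∑ w ∈ S with typeCount σ w = typeCount σ w₀, Q (typeCount σ w₀) w
        ≤ ∑ w, Q (typeCount σ w₀) w := sum_le_sum_of_subset (subset_univ _)
      _ = 1 := by
        rw [← ENNReal.ofReal_sum_of_nonneg fun w _ => by positivity,
          sum_prod_div_labelCount_eq_one σ (sum_typeCount_right σ w₀), ENNReal.ofReal_one]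
  calc ENNReal.ofReal (∑ w ∈ S, ∏ i, p (σ i) (w i))
      = ∑ w ∈ S, ENNReal.ofReal (∏ i, p (σ i) (w i)) :=
        ENNReal.ofReal_sum_of_nonneg fun w _ => prod_nonneg fun i _ => hp _ _
    _ ≤ ∑ w ∈ S, EReal.exp (-(J : EReal)) * Q (typeCount σ w) w := by
        refine sum_le_sum fun w hw => (ofReal_prod_le_exp_neg_klCost_mul hp hp1 σ w).trans ?_
        gcongr
        exact EReal.neg_le_neg_iff.2 (EReal.coe_ennreal_le_coe_ennreal_iff.2 (hJ w hw))
    _ = EReal.exp (-(J : EReal)) *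
          ∑ d ∈ S.image (typeCount σ), ∑ w ∈ S with typeCount σ w = d, Q d w := by
        rw [← mul_sum, ← sum_fiberwise_of_maps_to fun w hw => mem_image_of_mem (typeCount σ) hw]
        refine congrArg _ (sum_congr rfl fun d _ => sum_congr rfl fun w hw => ?_)
        rw [(mem_filter.1 hw).2]
    _ ≤ EReal.exp (-(J : EReal)) * #(S.image (typeCount σ)) := by
        gcongr
        simpa using sum_le_sum hfiber
    _ ≤ _ := by
        rw [mul_comm]
        gcongr
        exact_mod_cast card_image_typeCount_le σ S

end Labelled

section TimeSteps

variable {m n K : ℕ}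

theorem labelCount_uncurry {nk : Fin K → ℕ} {σ : Fin m → Fin n → Fin K}
    (hσ : ∀ t k, (Finset.univ.filter (fun i => σ t i = k)).card = nk k) (k : Fin K) :
    labelCount (Function.uncurry σ) k = m * nk k := by
  calc labelCount (Function.uncurry σ) k = ∑ t, #{i | σ t i = k} := by
        simp only [labelCount, card_filter, Fintype.sum_prod_type, Function.uncurry_apply_pair]
        rfl
    _ = m * nk k := by simp [hσ]

theorem empirical_eq_sum_typeCount {𝒳 : Type*} [DecidableEq 𝒳] {nk : Fin K → ℕ}
    {σ : Fin m → Fin n → Fin K}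
    (hσ : ∀ t k, (Finset.univ.filter (fun i => σ t i = k)).card = nk k)
    (w : Fin m → Fin n → 𝒳) (x : 𝒳) :
    ((Finset.univ.filter (fun q : Fin m × Fin n => w q.1 q.2 = x)).card : ℝ) / (m * n) =
      ∑ k, ((nk k : ℝ) / n) *
        ((typeCount (Function.uncurry σ) (Function.uncurry w) k x : ℝ) / (m * nk k)) := by
  have hcount : #{q : Fin m × Fin n | w q.1 q.2 = x} =
      ∑ k, typeCount (Function.uncurry σ) (Function.uncurry w) k x :=
    (sum_typeCount_left _ _ x).symm
  rw [hcount, Nat.cast_sum, sum_div]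
  refine sum_congr rfl fun k _ => ?_
  rcases (typeCount (Function.uncurry σ) (Function.uncurry w) k x).eq_zero_or_pos with h | h
  · simp [h]
  obtain ⟨⟨t, i⟩, hq⟩ := card_pos.1 h
  have hnk : 0 < nk k := hσ t k ▸ card_pos.2 ⟨i, by simp_all⟩
  have ht := t.pos
  have hi := i.pos
  field_simp

end TimeSteps

end Sanov

open Sanov

open Classical in
/-- Sample `(t, i)` is drawn from `p0 (σ t i)`, and a type `U_k ∈ 𝒫_{m n_k}` is encoded by its
counts `d k : 𝒳 → ℕ`, `U_k = d k / (m n_k)`. -/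
theorem stmt_13_general {𝒳 : Type*} [Fintype 𝒳] [DecidableEq 𝒳]
    (m n K : ℕ) (nk : Fin K → ℕ)
    (p0 : Fin K → 𝒳 → ℝ)
    (hp0 : ∀ k, (∀ x, 0 ≤ p0 k x) ∧ ∑ x, p0 k x = 1)
    (σ : Fin m → Fin n → Fin K)
    (hσ : ∀ t k, (Finset.univ.filter (fun i => σ t i = k)).card = nk k)
    (A : Set (𝒳 → ℝ))
    (I : ℝ≥0∞)
    (hI : I = ⨅ (d : Fin K → 𝒳 → ℕ)
        (_ : (∀ k, ∑ x, d k x = m * nk k)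
          ∧ (fun x => ∑ k, ((nk k : ℝ) / n) * ((d k x : ℝ) / (m * nk k))) ∈ A),
      ∑ k, ((m * nk k : ℕ) : ℝ≥0∞) * klD (fun x => (d k x : ℝ) / (m * nk k)) (p0 k)) :
    ENNReal.ofReal
      (∑ w ∈ Finset.univ.filter (fun w : Fin m → Fin n → 𝒳 =>
          (fun x => (((Finset.univ.filter
              (fun q : Fin m × Fin n => w q.1 q.2 = x)).card : ℝ) / (m * n)) : 𝒳 → ℝ) ∈ A),
        ∏ t, ∏ i, p0 (σ t i) (w t i))
    ≤ (∏ k, (Nat.card (typeSet 𝒳 (m * nk k)) : ℝ≥0∞)) * EReal.exp (-(I : EReal)) := by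
  have hlabel : labelCount (Function.uncurry σ) = fun k => m * nk k :=
    funext (labelCount_uncurry hσ)
  set S := Finset.univ.filter (fun w : Fin m → Fin n → 𝒳 =>
    (fun x => (((Finset.univ.filter
      (fun q : Fin m × Fin n => w q.1 q.2 = x)).card : ℝ) / (m * n)) : 𝒳 → ℝ) ∈ A)
  have hJ : ∀ v ∈ S.map (Equiv.curry _ _ _).symm.toEmbedding,
      I ≤ klCost (labelCount (Function.uncurry σ)) p0 (typeCount (Function.uncurry σ) v) := by
    intro v hv
    obtain ⟨w, hw, rfl⟩ := mem_map.1 hv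
    have hmix := (mem_filter.1 hw).2
    simp only [empirical_eq_sum_typeCount hσ] at hmix
    rw [hI, hlabel]
    refine iInf₂_le_of_le (typeCount (Function.uncurry σ) (Function.uncurry w))
      ⟨fun k => (sum_typeCount_right _ _ k).trans (labelCount_uncurry hσ k), hmix⟩ ?_
    simp [klCost]
  have key := ofReal_sum_prod_le_card_mul_exp_neg (fun k => (hp0 k).1) (fun k => (hp0 k).2.le)
    (Function.uncurry σ) _ I hJ
  rw [hlabel, sum_map] at key
  simpa [Fintype.prod_prod_type] using key

open Classical in
/-- Sanov-type bound: `mn` mutually independent samples are collected over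
`m` time steps, at each time step `n_k` of them drawn from `p0 k` (encoded by per-time
labelings `σ t` with exactly `n_k` indices in group `k`); `Π` is the empirical distribution
of all `mn` samples.  For every `A ⊆ 𝒫_𝒳`,
`ℙ(Π ∈ A) ≤ (∏_k |𝒫_{m n_k}|) · exp(−inf{ ∑_k m n_k D(U_k‖p0_k) :
   U_k ∈ 𝒫_{m n_k}, ∑_k (n_k/n) U_k ∈ A })`,
where a type `U_k ∈ 𝒫_{m n_k}` is encoded by its counts `d k : 𝒳 → ℕ`, `U_k = d k/(m n_k)`. -/
theorem stmt_13 {𝒳 : Type*} [Fintype 𝒳] [DecidableEq 𝒳]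
    (m n K : ℕ) (hm : 1 ≤ m) (nk : Fin K → ℕ) (hn : ∑ k, nk k = n)
    (p0 : Fin K → 𝒳 → ℝ)
    (hp0 : ∀ k, (∀ x, 0 ≤ p0 k x) ∧ ∑ x, p0 k x = 1)
    (σ : Fin m → Fin n → Fin K)
    (hσ : ∀ t k, (Finset.univ.filter (fun i => σ t i = k)).card = nk k)
    (A : Set (𝒳 → ℝ))
    (I : ℝ≥0∞)
    (hI : I = ⨅ (d : Fin K → 𝒳 → ℕ)
        (_ : (∀ k, ∑ x, d k x = m * nk k)
          ∧ (fun x => ∑ k, ((nk k : ℝ) / n) * ((d k x : ℝ) / (m * nk k))) ∈ A),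
      ∑ k, ((m * nk k : ℕ) : ℝ≥0∞) * klD (fun x => (d k x : ℝ) / (m * nk k)) (p0 k)) :
    ENNReal.ofReal
      (∑ w ∈ Finset.univ.filter (fun w : Fin m → Fin n → 𝒳 =>
          (fun x => (((Finset.univ.filter
              (fun q : Fin m × Fin n => w q.1 q.2 = x)).card : ℝ) / (m * n)) : 𝒳 → ℝ) ∈ A),
        ∏ t, ∏ i, p0 (σ t i) (w t i))
    ≤ (∏ k, (Nat.card (typeSet 𝒳 (m * nk k)) : ℝ≥0∞)) * EReal.exp (-(I : EReal)) :=
  stmt_13_general m n K nk p0 hp0 σ hσ A I hI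
end

section
/- Let Γ = {μ ∈ 𝒫_𝒳 : f_{𝐏_0}(α,μ) > f_{𝐏_1}(α,μ)} and h = inf{ Σ_{k=1}^K n_k D(U_k‖p_{0,k}) : U_1,…,U_K ∈ 𝒫_𝒳, Σ_k α_k U_k ∈ Γ }, where α_k = n_k/n. Let Y = inf{t ≥ 1 : Ŵ[t] ≤ 0} be the first regeneration time of the computationally efficient statistic. Then for every label sequence Ω and every integer m ≥ 1, ℙ^∞_Ω(Y > m) ≤ (∏_{k=1}^K |𝒫_{m n_k}|) · e^{−m h}. -/
/-!
If `Ŵ` stays positive up to time `m`, then `ν̂` never moves, so `Ŵ` at the last time is computed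
on the whole window and the empirical distribution of the window lies in `Γ`. That distribution
is the `α`-mixture of the per-group types `V_k`, hence `m h ≤ ∑ m n_k D(V_k‖p_{0,k})`. For a
fixed observation sequence, its `ℙ_0`-probability is `exp (-∑ m n_k D(V_k‖p_{0,k}))` times its
probability under the product of the `V_k`, so at most `e^{-mh}` times the latter. Summing the
latter over the sequences of a fixed type tuple gives at most `1`, and there are at most
`∏ |𝒫_{m n_k}|` type tuples.
-/

open scoped ENNReal

/-- Empirical distribution of all `n`-sensor samples observed at times `a, a+1, …, t`
(time is indexed from `0`). -/
noncomputable def empSeg {𝒳 : Type*} [Fintype 𝒳] [DecidableEq 𝒳] (n : ℕ)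
    (ω : ℕ → Fin n → 𝒳) (a t : ℕ) : 𝒳 → ℝ :=
  fun x => (((Finset.Icc a t ×ˢ (Finset.univ : Finset (Fin n))).filter
      (fun q => ω q.1 q.2 = x)).card : ℝ) / (((t - a + 1) * n : ℕ) : ℝ)

/-- The efficient statistic at time `t` if the current change-point estimate is `a`:
`(t − a + 1) · n · [ f_{P0}(α, Π_{ω[a,t]}) − f_{P1}(α, Π_{ω[a,t]}) ]` (as extended reals). -/
noncomputable def Wstat {𝒳 : Type*} [Fintype 𝒳] [DecidableEq 𝒳] {K : ℕ} (n : ℕ)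
    (α : Fin K → ℝ) (P0 P1 : Fin K → 𝒳 → ℝ) (ω : ℕ → Fin n → 𝒳) (a t : ℕ) : EReal :=
  (((((t - a + 1) * n : ℕ)) : ℝ) : EReal) *
    ((fP α P0 (empSeg n ω a t) : EReal) - (fP α P1 (empSeg n ω a t) : EReal))

/-- The recursively updated change-point estimate `ν̂_t` (time indexed from `0`, so `ν̂_0 = 0`;
`ν̂_{t+1} = t+1` if `Ŵ[t] ≤ 0` and `ν̂_{t+1} = ν̂_t` otherwise). -/
noncomputable def nuhat {𝒳 : Type*} [Fintype 𝒳] [DecidableEq 𝒳] {K : ℕ} (n : ℕ)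
    (α : Fin K → ℝ) (P0 P1 : Fin K → 𝒳 → ℝ) (ω : ℕ → Fin n → 𝒳) : ℕ → ℕ := by
  classical
  exact fun t => Nat.rec 0
    (fun s prev => if Wstat n α P0 P1 ω prev s ≤ 0 then s + 1 else prev) t

/-- The computationally efficient detection statistic `Ŵ[t]`. -/
noncomputable def What {𝒳 : Type*} [Fintype 𝒳] [DecidableEq 𝒳] {K : ℕ} (n : ℕ)
    (α : Fin K → ℝ) (P0 P1 : Fin K → 𝒳 → ℝ) (ω : ℕ → Fin n → 𝒳) (t : ℕ) : EReal :=
  Wstat n α P0 P1 ω (nuhat n α P0 P1 ω t) t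

/-- Extension of a finite prefix of observations to an infinite path (the values beyond the
prefix are irrelevant for the statistics computed on the prefix). -/
noncomputable def extendPath {𝒳 : Type*} [Nonempty 𝒳] (n m : ℕ)
    (w : Fin m → Fin n → 𝒳) : ℕ → Fin n → 𝒳 :=
  fun t => if h : t < m then w ⟨t, h⟩ else fun _ => Classical.arbitrary 𝒳

open Real Finset InformationTheory

lemma EReal.exp_neg_coe_ofReal {r : ℝ} (hr : 0 ≤ r) :
    EReal.exp (-((ENNReal.ofReal r : ℝ≥0∞) : EReal)) = ENNReal.ofReal (Real.exp (-r)) := by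
  rw [EReal.coe_ennreal_ofReal, max_eq_left hr, ← EReal.coe_neg, EReal.exp_coe]

lemma EReal.prod_exp_neg_coe {ι : Type*} (s : Finset ι) (a : ι → ℝ≥0∞) :
    ∏ k ∈ s, EReal.exp (-(a k : EReal)) = EReal.exp (-((∑ k ∈ s, a k : ℝ≥0∞) : EReal)) := by
  induction s using Finset.cons_induction with
  | empty => simp
  | cons i s hi ih =>
    rw [prod_cons, sum_cons, ih, ← EReal.exp_add, EReal.coe_ennreal_add,
      EReal.neg_add (Or.inl (EReal.coe_ennreal_ne_bot _)) (Or.inr (EReal.coe_ennreal_ne_bot _)),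
      sub_eq_add_neg]

lemma EReal.exp_neg_coe_antitone : Antitone fun a : ℝ≥0∞ => EReal.exp (-(a : EReal)) :=
  fun _ _ hab => EReal.exp_monotone (EReal.neg_le_neg_iff.mpr
    (EReal.coe_ennreal_le_coe_ennreal_iff.mpr hab))

lemma EReal.lt_of_coe_mul_sub_pos {c : ℝ} (hc : 0 ≤ c) {A B : ℝ≥0∞}
    (h : 0 < (c : EReal) * ((A : EReal) - B)) : B < A := by
  by_contra! hAB
  exact h.not_ge (mul_nonpos_of_nonneg_of_nonpos (EReal.coe_nonneg.mpr hc)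
    (EReal.sub_nonpos.mpr (EReal.coe_ennreal_le_coe_ennreal_iff.mpr hAB)))

section KullbackLeibler

variable {𝒳 : Type*} [Fintype 𝒳]

lemma klD_of_absolutelyContinuous {U P : 𝒳 → ℝ} (h : ∀ x, P x = 0 → U x = 0) :
    klD U P = ENNReal.ofReal (∑ x, U x * log (U x / P x)) := by
  simp only [klD, if_pos h]

lemma sum_mul_log_div_nonneg {p U : 𝒳 → ℝ} (hp : p ∈ stdSimplex ℝ 𝒳)
    (hU : U ∈ stdSimplex ℝ 𝒳) (hac : ∀ x, p x = 0 → U x = 0) :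
    0 ≤ ∑ x, U x * log (U x / p x) := by
  have hterm : ∀ x, U x * log (U x / p x) = p x * klFun (U x / p x) - p x + U x := by
    intro x
    rcases (hp.1 x).eq_or_lt with h0 | h0
    · simp [← h0, hac x h0.symm]
    · rw [klFun]
      field_simp
      ring
  rw [sum_congr rfl fun x _ => hterm x, sum_add_distrib, sum_sub_distrib, hp.2, hU.2,
    sub_add_cancel]
  exact sum_nonneg fun x _ =>
    mul_nonneg (hp.1 x) (klFun_nonneg (div_nonneg (hU.1 x) (hp.1 x)))

lemma pow_eq_exp_neg_mul_log_div_mul_pow {a b : ℝ} {c : ℕ} (ha : 0 ≤ a) (hab : a = 0 → b = 0)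
    (hb : c ≠ 0 → 0 < b) : a ^ c = exp (-(c * log (b / a))) * b ^ c := by
  rcases eq_or_ne c 0 with rfl | hc
  · simp
  have hb := hb hc
  have ha : 0 < a := ha.lt_of_ne fun h => hb.ne' (hab h.symm)
  rw [← mul_neg, ← log_inv, inv_div, ← log_pow, exp_log (by positivity), div_pow,
    div_mul_cancel₀ _ (pow_ne_zero _ hb.ne')]

lemma prod_pow_le_exp_neg_klD_mul_prod_pow {p U : 𝒳 → ℝ} (hp : p ∈ stdSimplex ℝ 𝒳)
    (hU : U ∈ stdSimplex ℝ 𝒳) {c : 𝒳 → ℕ} {N : ℕ} (hc : ∀ x, (c x : ℝ) = U x * N) :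
    ∏ x, ENNReal.ofReal (p x) ^ c x
      ≤ EReal.exp (-((N * klD U p : ℝ≥0∞) : EReal)) * ∏ x, ENNReal.ofReal (U x) ^ c x := by
  by_cases hac : ∀ x, p x = 0 → U x = 0
  · have hS := sum_mul_log_div_nonneg hp hU hac
    have hpos : ∀ x, c x ≠ 0 → 0 < U x := fun x hx =>
      (hU.1 x).lt_of_ne fun h => hx (Nat.cast_eq_zero.mp ((hc x).trans (by rw [← h, zero_mul])))
    rw [klD_of_absolutelyContinuous hac, ← ENNReal.ofReal_natCast,
      ← ENNReal.ofReal_mul (Nat.cast_nonneg _), EReal.exp_neg_coe_ofReal (by positivity)]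
    simp only [← ENNReal.ofReal_pow (hp.1 _), ← ENNReal.ofReal_pow (hU.1 _),
      ← ENNReal.ofReal_prod_of_nonneg fun x _ => pow_nonneg (hp.1 x) _,
      ← ENNReal.ofReal_prod_of_nonneg fun x _ => pow_nonneg (hU.1 x) _,
      ← ENNReal.ofReal_mul (exp_nonneg _)]
    refine (congrArg ENNReal.ofReal ?_).le
    rw [mul_sum, ← sum_neg_distrib, exp_sum, ← prod_mul_distrib]
    refine prod_congr rfl fun x _ => ?_
    rw [← mul_assoc, mul_comm (N : ℝ), ← hc x]
    exact pow_eq_exp_neg_mul_log_div_mul_pow (hp.1 x) (hac x) (hpos x)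
  · push Not at hac
    obtain ⟨x₀, hpx₀, hUx₀⟩ := hac
    rcases eq_or_ne N 0 with rfl | hN
    · have hc0 : ∀ x, c x = 0 := fun x => Nat.cast_eq_zero.mp ((hc x).trans (by simp))
      simp [hc0]
    · have hcx₀ : c x₀ ≠ 0 := fun h => mul_ne_zero hUx₀ (Nat.cast_ne_zero.mpr hN)
        (by rw [← hc x₀, h, Nat.cast_zero])
      rw [prod_eq_zero (mem_univ x₀) (by rw [hpx₀, ENNReal.ofReal_zero, zero_pow hcx₀])]
      exact bot_le

end KullbackLeibler

section Configurations

variable {ι κ 𝒳 : Type*} [Fintype ι] [DecidableEq ι] [Fintype κ] [DecidableEq κ] [Fintype 𝒳]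

lemma sum_prod_prod_apply {R : Type*} [CommSemiring R] (F : ι → κ → 𝒳 → R) :
    ∑ w : ι → κ → 𝒳, ∏ t, ∏ i, F t i (w t i) = ∏ t, ∏ i, ∑ x, F t i x := by
  rw [← Fintype.prod_sum fun t (u : κ → 𝒳) => ∏ i, F t i (u i)]
  exact prod_congr rfl fun t _ => (Fintype.prod_sum _).symm

lemma sum_prod_prod_ofReal_eq_one (q : ι → κ → 𝒳 → ℝ) (hq : ∀ t i, q t i ∈ stdSimplex ℝ 𝒳) :
    ∑ w : ι → κ → 𝒳, ∏ t, ∏ i, ENNReal.ofReal (q t i (w t i)) = 1 := by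
  rw [sum_prod_prod_apply fun t i x => ENNReal.ofReal (q t i x)]
  refine prod_eq_one fun t _ => prod_eq_one fun i _ => ?_
  rw [← ENNReal.ofReal_sum_of_nonneg fun x _ => (hq t i).1 x, (hq t i).2, ENNReal.ofReal_one]

end Configurations

section Types

variable {𝒳 : Type*} [Fintype 𝒳]

lemma typeSet_finite (N : ℕ) : (typeSet 𝒳 N).Finite := by
  refine (Set.finite_range fun c : 𝒳 → Fin (N + 1) => fun x => ((c x : ℕ) : ℝ) / N).subset ?_
  rintro q ⟨c, hq, hc⟩
  refine ⟨fun x => ⟨c x, Nat.lt_succ_of_le ?_⟩, funext fun x => (hq x).symm⟩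
  exact hc ▸ single_le_sum (fun _ _ => Nat.zero_le _) (mem_univ x)

lemma eq_of_forall_natCast_div_eq {c c' : 𝒳 → ℕ} {N : ℕ} (hc : ∑ x, c x = N)
    (hc' : ∑ x, c' x = N) (h : ∀ x, (c x : ℝ) / N = c' x / N) : c = c' := by
  funext x
  rcases eq_or_ne N 0 with rfl | hN
  · rw [sum_eq_zero_iff.mp hc x (mem_univ x), sum_eq_zero_iff.mp hc' x (mem_univ x)]
  · exact_mod_cast (div_left_inj' (Nat.cast_ne_zero.mpr hN)).mp (h x)

lemma card_le_prod_card_typeSet {ι : Type*} [Fintype ι] (S : Finset (ι → 𝒳 → ℕ)) (N : ι → ℕ)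
    (hS : ∀ v ∈ S, ∀ k, ∑ x, v k x = N k) : #S ≤ ∏ k, Nat.card (typeSet 𝒳 (N k)) := by
  have : ∀ k, Finite (typeSet 𝒳 (N k)) := fun k => (typeSet_finite (N k)).to_subtype
  let toTypes : S → ∀ k, typeSet 𝒳 (N k) := fun v k =>
    ⟨fun x => (v.1 k x : ℝ) / N k, v.1 k, fun _ => rfl, hS v.1 v.2 k⟩
  have hinj : Function.Injective toTypes := fun v v' hvv' => Subtype.ext <| funext fun k =>
    eq_of_forall_natCast_div_eq (hS v.1 v.2 k) (hS v'.1 v'.2 k)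
      (congrFun (congrArg Subtype.val (congrFun hvv' k)))
  calc #S = Nat.card S := (Nat.card_eq_finsetCard S).symm
    _ ≤ Nat.card (∀ k, typeSet 𝒳 (N k)) := Nat.card_le_card_of_injective toTypes hinj
    _ = ∏ k, Nat.card (typeSet 𝒳 (N k)) := Nat.card_pi

/-- The type `c / N` of a count vector `c` with total `N`; for `N = 0` it is replaced by the
reference distribution `q`, so that it is a probability vector in all cases. -/
noncomputable def groupType (c : 𝒳 → ℕ) (N : ℕ) (q : 𝒳 → ℝ) : 𝒳 → ℝ :=
  if N = 0 then q else fun x => c x / N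

lemma groupType_mem_stdSimplex {c : 𝒳 → ℕ} {N : ℕ} {q : 𝒳 → ℝ} (hc : ∑ x, c x = N)
    (hq : q ∈ stdSimplex ℝ 𝒳) : groupType c N q ∈ stdSimplex ℝ 𝒳 := by
  unfold groupType
  split_ifs with hN
  · exact hq
  · refine ⟨fun x => by positivity, ?_⟩
    rw [← sum_div, ← Nat.cast_sum, hc, div_self (Nat.cast_ne_zero.mpr hN)]

lemma natCast_eq_groupType_mul {c : 𝒳 → ℕ} {N : ℕ} (hc : ∑ x, c x = N) (q : 𝒳 → ℝ) (x : 𝒳) :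
    (c x : ℝ) = groupType c N q x * N := by
  unfold groupType
  split_ifs with hN
  · simp [sum_eq_zero_iff.mp (hc.trans hN) x (mem_univ x), hN]
  · exact (div_mul_cancel₀ _ (Nat.cast_ne_zero.mpr hN)).symm

end Types

section Counts

variable {𝒳 : Type*} [DecidableEq 𝒳] {n K m : ℕ}

def groupCount (Ω : ℕ → Fin n → Fin K) (w : Fin m → Fin n → 𝒳) (k : Fin K) (x : 𝒳) : ℕ :=
  #{q : Fin m × Fin n | (Ω q.1 q.2, w q.1 q.2) = (k, x)}

lemma sum_groupCount_over_symbols [Fintype 𝒳] {nk : Fin K → ℕ} {Ω : ℕ → Fin n → Fin K}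
    (hΩ : ∀ t k, #{i | Ω t i = k} = nk k) (w : Fin m → Fin n → 𝒳) (k : Fin K) :
    ∑ x, groupCount Ω w k x = m * nk k := by
  simp only [groupCount, card_filter, Prod.mk.injEq, ite_and]
  rw [sum_comm]
  simp only [sum_ite_irrel, sum_ite_eq, mem_univ, if_true, sum_const_zero]
  rw [Fintype.sum_prod_type]
  simp only [← card_filter, hΩ, sum_const, card_univ, Fintype.card_fin, smul_eq_mul]

lemma sum_groupCount_over_groups (Ω : ℕ → Fin n → Fin K) (w : Fin m → Fin n → 𝒳) (x : 𝒳) :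
    ∑ k, groupCount Ω w k x = #{q : Fin m × Fin n | w q.1 q.2 = x} := by
  simp only [groupCount, card_filter, Prod.mk.injEq, ite_and]
  rw [sum_comm]
  simp

lemma prod_prod_eq_prod_prod_pow_groupCount [Fintype 𝒳] {M : Type*} [CommMonoid M]
    (Ω : ℕ → Fin n → Fin K) (w : Fin m → Fin n → 𝒳) (V : Fin K → 𝒳 → M) :
    ∏ t : Fin m, ∏ i, V (Ω t i) (w t i) = ∏ k, ∏ x, V k x ^ groupCount Ω w k x := by
  let g : Fin m × Fin n → Fin K × 𝒳 := fun q => (Ω q.1 q.2, w q.1 q.2)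
  calc ∏ t : Fin m, ∏ i, V (Ω t i) (w t i) = ∏ q, Function.uncurry V (g q) :=
        (Fintype.prod_prod_type (fun q => Function.uncurry V (g q))).symm
    _ = ∏ j, ∏ q with g q = j, Function.uncurry V j :=
        (prod_fiberwise_of_maps_to (fun _ _ => mem_univ _) _).symm.trans
          (prod_congr rfl fun j _ => prod_congr rfl fun q hq => by rw [(mem_filter.mp hq).2])
    _ = ∏ k, ∏ x, V k x ^ groupCount Ω w k x := by
        simp only [prod_const, Fintype.prod_prod_type]
        rfl

lemma prod_prod_ofReal_le_exp_neg_sum_klD_mul [Fintype 𝒳] (Ω : ℕ → Fin n → Fin K)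
    (w : Fin m → Fin n → 𝒳) {p U : Fin K → 𝒳 → ℝ}
    (hp : ∀ k, p k ∈ stdSimplex ℝ 𝒳) (hU : ∀ k, U k ∈ stdSimplex ℝ 𝒳) {N : Fin K → ℕ}
    (hc : ∀ k x, (groupCount Ω w k x : ℝ) = U k x * N k) :
    ∏ t : Fin m, ∏ i, ENNReal.ofReal (p (Ω t i) (w t i))
      ≤ EReal.exp (-((∑ k, (N k : ℝ≥0∞) * klD (U k) (p k) : ℝ≥0∞) : EReal))
        * ∏ t : Fin m, ∏ i, ENNReal.ofReal (U (Ω t i) (w t i)) := by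
  rw [prod_prod_eq_prod_prod_pow_groupCount Ω w fun k x => ENNReal.ofReal (p k x),
    prod_prod_eq_prod_prod_pow_groupCount Ω w fun k x => ENNReal.ofReal (U k x),
    ← EReal.prod_exp_neg_coe, ← prod_mul_distrib]
  exact prod_le_prod' fun k _ => prod_pow_le_exp_neg_klD_mul_prod_pow (hp k) (hU k) (hc k)

end Counts

lemma mixture_mem_stdSimplex {ι 𝒳 : Type*} [Fintype ι] [Fintype 𝒳] {α : ι → ℝ}
    (hα₀ : ∀ k, 0 ≤ α k) (hα₁ : ∑ k, α k = 1) {U : ι → 𝒳 → ℝ}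
    (hU : ∀ k, U k ∈ stdSimplex ℝ 𝒳) : (fun x => ∑ k, α k * U k x) ∈ stdSimplex ℝ 𝒳 := by
  convert (convex_stdSimplex ℝ 𝒳).sum_mem (fun k _ => hα₀ k) hα₁ fun k _ => hU k using 1
  funext x
  simp [Finset.sum_apply]

lemma sum_le_card_image_of_sum_fiber_le_one {β γ : Type*} [DecidableEq γ] (E : Finset β) (g : β → γ)
    (f : γ → β → ℝ≥0∞) (hf : ∀ v ∈ E.image g, ∑ w ∈ E with g w = v, f v w ≤ 1) :
    ∑ w ∈ E, f (g w) w ≤ #(E.image g) := by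
  rw [← sum_fiberwise_of_maps_to fun w hw => mem_image_of_mem g hw]
  calc ∑ v ∈ E.image g, ∑ w ∈ E with g w = v, f (g w) w
      = ∑ v ∈ E.image g, ∑ w ∈ E with g w = v, f v w :=
        sum_congr rfl fun v _ => sum_congr rfl fun w hw => by rw [(mem_filter.mp hw).2]
    _ ≤ ∑ _v ∈ E.image g, 1 := sum_le_sum hf
    _ = #(E.image g) := by simp

section Statistic

variable {𝒳 : Type*} [Fintype 𝒳] [DecidableEq 𝒳] {n K : ℕ} {α : Fin K → ℝ}
  {P₀ P₁ : Fin K → 𝒳 → ℝ}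

lemma fP_lt_of_Wstat_pos {ω : ℕ → Fin n → 𝒳} {a t : ℕ} (h : 0 < Wstat n α P₀ P₁ ω a t) :
    fP α P₁ (empSeg n ω a t) < fP α P₀ (empSeg n ω a t) :=
  EReal.lt_of_coe_mul_sub_pos (Nat.cast_nonneg _) h

lemma nuhat_eq_zero_of_forall_What_pos {ω : ℕ → Fin n → 𝒳} {m : ℕ}
    (hω : ∀ s < m, 0 < What n α P₀ P₁ ω s) : ∀ s ≤ m, nuhat n α P₀ P₁ ω s = 0 := by
  intro s
  induction s with
  | zero => exact fun _ => rfl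
  | succ s ih =>
    intro hs
    show (if Wstat n α P₀ P₁ ω (nuhat n α P₀ P₁ ω s) s ≤ 0 then s + 1
      else nuhat n α P₀ P₁ ω s) = 0
    exact (if_neg (hω s hs).not_ge).trans (ih (by omega))

lemma fP_lt_of_forall_What_pos {ω : ℕ → Fin n → 𝒳} {m : ℕ} (hm : 0 < m)
    (hω : ∀ s < m, 0 < What n α P₀ P₁ ω s) :
    fP α P₁ (empSeg n ω 0 (m - 1)) < fP α P₀ (empSeg n ω 0 (m - 1)) := by
  have h := hω (m - 1) (by omega)
  rw [What, nuhat_eq_zero_of_forall_What_pos hω (m - 1) (by omega)] at h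
  exact fP_lt_of_Wstat_pos h

lemma empSeg_extendPath [Nonempty 𝒳] {m : ℕ} (hm : 0 < m) (w : Fin m → Fin n → 𝒳) (x : 𝒳) :
    empSeg n (extendPath n m w) 0 (m - 1) x
      = #{q : Fin m × Fin n | w q.1 q.2 = x} / ((m * n : ℕ) : ℝ) := by
  have hIcc : Icc 0 (m - 1) = range m := by ext; simp; omega
  have hcard : #{q ∈ Icc 0 (m - 1) ×ˢ univ | extendPath n m w q.1 q.2 = x}
      = #{q : Fin m × Fin n | w q.1 q.2 = x} := by
    simp only [card_filter, hIcc, sum_product, Fintype.sum_prod_type]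
    rw [sum_range]
    simp [extendPath]
  rw [empSeg, hcard, Nat.sub_zero, Nat.sub_add_cancel hm]

end Statistic

section GroupTypes

variable {𝒳 : Type*} [Fintype 𝒳] [DecidableEq 𝒳] {n K m : ℕ} {nk : Fin K → ℕ}
  {Ω : ℕ → Fin n → Fin K}

noncomputable def groupTypes (Ω : ℕ → Fin n → Fin K) (nk : Fin K → ℕ) (P : Fin K → 𝒳 → ℝ)
    (w : Fin m → Fin n → 𝒳) (k : Fin K) : 𝒳 → ℝ :=
  groupType (groupCount Ω w k) (m * nk k) (P k)

lemma groupTypes_mem_stdSimplex (hΩ : ∀ t k, #{i | Ω t i = k} = nk k) {P : Fin K → 𝒳 → ℝ}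
    (hP : ∀ k, P k ∈ stdSimplex ℝ 𝒳) (w : Fin m → Fin n → 𝒳) (k : Fin K) :
    groupTypes Ω nk P w k ∈ stdSimplex ℝ 𝒳 :=
  groupType_mem_stdSimplex (sum_groupCount_over_symbols hΩ w k) (hP k)

lemma natCast_groupCount_eq_groupTypes_mul (hΩ : ∀ t k, #{i | Ω t i = k} = nk k)
    (P : Fin K → 𝒳 → ℝ) (w : Fin m → Fin n → 𝒳) (k : Fin K) (x : 𝒳) :
    (groupCount Ω w k x : ℝ) = groupTypes Ω nk P w k x * (m * nk k : ℕ) :=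
  natCast_eq_groupType_mul (sum_groupCount_over_symbols hΩ w k) (P k) x

lemma mixture_groupTypes_eq_empSeg [Nonempty 𝒳] (hΩ : ∀ t k, #{i | Ω t i = k} = nk k)
    (hnpos : 0 < n) {α : Fin K → ℝ} (hα : ∀ k, α k = (nk k : ℝ) / n) (hm : 0 < m)
    (P : Fin K → 𝒳 → ℝ) (w : Fin m → Fin n → 𝒳) :
    (fun x => ∑ k, α k * groupTypes Ω nk P w k x) = empSeg n (extendPath n m w) 0 (m - 1) := by
  funext x
  rw [empSeg_extendPath hm, ← sum_groupCount_over_groups, Nat.cast_sum, sum_div]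
  refine sum_congr rfl fun k _ => ?_
  rw [natCast_groupCount_eq_groupTypes_mul hΩ P, hα]
  have : (n : ℝ) ≠ 0 := Nat.cast_ne_zero.mpr hnpos.ne'
  have : (m : ℝ) ≠ 0 := Nat.cast_ne_zero.mpr hm.ne'
  push_cast
  field_simp

lemma mixture_groupTypes_mem_of_forall_What_pos [Nonempty 𝒳]
    (hΩ : ∀ t k, #{i | Ω t i = k} = nk k) (hnpos : 0 < n) (hn : ∑ k, nk k = n)
    {α : Fin K → ℝ} (hα : ∀ k, α k = (nk k : ℝ) / n) (hm : 0 < m) {P₀ P₁ : Fin K → 𝒳 → ℝ}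
    (hP₀ : ∀ k, P₀ k ∈ stdSimplex ℝ 𝒳) {w : Fin m → Fin n → 𝒳}
    (hw : ∀ s : Fin m, 0 < What n α P₀ P₁ (extendPath n m w) s) :
    (fun x => ∑ k, α k * groupTypes Ω nk P₀ w k x) ∈ stdSimplex ℝ 𝒳
      ∧ fP α P₁ (fun x => ∑ k, α k * groupTypes Ω nk P₀ w k x)
        < fP α P₀ (fun x => ∑ k, α k * groupTypes Ω nk P₀ w k x) := by
  have hα₀ : ∀ k, 0 ≤ α k := fun k => hα k ▸ by positivity
  have hα₁ : ∑ k, α k = 1 := by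
    rw [sum_congr rfl fun k _ => hα k, ← sum_div, ← Nat.cast_sum, hn,
      div_self (Nat.cast_pos.mpr hnpos).ne']
  refine ⟨mixture_mem_stdSimplex hα₀ hα₁ (groupTypes_mem_stdSimplex hΩ hP₀ w), ?_⟩
  rw [mixture_groupTypes_eq_empSeg hΩ hnpos hα hm]
  exact fP_lt_of_forall_What_pos hm fun s hs => hw ⟨s, hs⟩

lemma sum_prod_prod_ofReal_groupTypes_le (hΩ : ∀ t k, #{i | Ω t i = k} = nk k)
    {P : Fin K → 𝒳 → ℝ} (hP : ∀ k, P k ∈ stdSimplex ℝ 𝒳) (E : Finset (Fin m → Fin n → 𝒳)) :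
    ∑ w ∈ E, ∏ t : Fin m, ∏ i, ENNReal.ofReal (groupTypes Ω nk P w (Ω t i) (w t i))
      ≤ ∏ k, (Nat.card (typeSet 𝒳 (m * nk k)) : ℝ≥0∞) := by
  have hsum : ∀ v ∈ E.image (groupCount Ω), ∀ k, ∑ x, v k x = m * nk k := by
    intro v hv k
    obtain ⟨w, -, rfl⟩ := mem_image.mp hv
    exact sum_groupCount_over_symbols hΩ w k
  refine (sum_le_card_image_of_sum_fiber_le_one E (groupCount Ω) (fun v w => ∏ t : Fin m, ∏ i,
      ENNReal.ofReal (groupType (v (Ω t i)) (m * nk (Ω t i)) (P (Ω t i)) (w t i)))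
      fun v hv => ?_).trans ?_
  · refine (sum_le_sum_of_subset (subset_univ _)).trans_eq
      (sum_prod_prod_ofReal_eq_one _ fun t i => ?_)
    exact groupType_mem_stdSimplex (hsum v hv _) (hP _)
  · rw [← Nat.cast_prod]
    exact Nat.cast_le.mpr (card_le_prod_card_typeSet _ _ hsum)

end GroupTypes

open Classical in
/-- Time is `0`-based (paper time `t` is `s = t − 1`). The event `{Y > m}` depends only on the
first `m` observation vectors, and its probability is written as the corresponding finite sum. -/
theorem stmt_14 {𝒳 : Type*} [Fintype 𝒳] [DecidableEq 𝒳] [Nonempty 𝒳]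
    (n K : ℕ) (hnpos : 0 < n) (nk : Fin K → ℕ) (hn : ∑ k, nk k = n)
    (p : Bool → Fin K → 𝒳 → ℝ)
    (hp : ∀ θ k, (∀ x, 0 ≤ p θ k x) ∧ ∑ x, p θ k x = 1)
    (α : Fin K → ℝ) (hα : ∀ k, α k = (nk k : ℝ) / n)
    (Ω : ℕ → Fin n → Fin K)
    (hΩ : ∀ t k, (Finset.univ.filter (fun i => Ω t i = k)).card = nk k)
    (Gam : Set (𝒳 → ℝ))
    (hGam : Gam = {q | ((∀ x, 0 ≤ q x) ∧ ∑ x, q x = 1)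
      ∧ fP α (p true) q < fP α (p false) q})
    (h : ℝ≥0∞)
    (hh : h = ⨅ (U : Fin K → 𝒳 → ℝ)
        (_ : (∀ k, (∀ x, 0 ≤ U k x) ∧ ∑ x, U k x = 1)
          ∧ (fun x => ∑ k, α k * U k x) ∈ Gam),
      ∑ k, ((nk k : ℕ) : ℝ≥0∞) * klD (U k) (p false k))
    (m : ℕ) (hm : 1 ≤ m) :
    ENNReal.ofReal
      (∑ w ∈ Finset.univ.filter (fun w : Fin m → Fin n → 𝒳 =>
          ∀ s : Fin m, 0 < What n α (p false) (p true) (extendPath n m w) s),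
        ∏ t : Fin m, ∏ i, p false (Ω (t : ℕ) i) (w t i))
    ≤ (∏ k, (Nat.card (typeSet 𝒳 (m * nk k)) : ℝ≥0∞))
        * EReal.exp (-(((m : ℝ≥0∞) * h : ℝ≥0∞) : EReal)) := by
  set E := univ.filter fun w : Fin m → Fin n → 𝒳 =>
    ∀ s : Fin m, 0 < What n α (p false) (p true) (extendPath n m w) s
  have hmh : ∀ w ∈ E, (m : ℝ≥0∞) * h
      ≤ ∑ k, ((m * nk k : ℕ) : ℝ≥0∞) * klD (groupTypes Ω nk (p false) w k) (p false k) := by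
    intro w hw
    have hmem := mixture_groupTypes_mem_of_forall_What_pos hΩ hnpos hn hα hm (hp false)
      (mem_filter.mp hw).2
    simp_rw [Nat.cast_mul, mul_assoc, ← mul_sum]
    exact mul_le_mul_right (hh ▸ iInf₂_le _
      ⟨groupTypes_mem_stdSimplex hΩ (hp false) w, hGam ▸ hmem⟩) _
  rw [ENNReal.ofReal_sum_of_nonneg fun w _ =>
    prod_nonneg fun t _ => prod_nonneg fun i _ => (hp false _).1 _, mul_comm]
  calc ∑ w ∈ E, ENNReal.ofReal (∏ t : Fin m, ∏ i, p false (Ω t i) (w t i))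
      = ∑ w ∈ E, ∏ t : Fin m, ∏ i, ENNReal.ofReal (p false (Ω t i) (w t i)) := by
        simp_rw [ENNReal.ofReal_prod_of_nonneg fun _ _ => prod_nonneg fun _ _ => (hp false _).1 _,
          ENNReal.ofReal_prod_of_nonneg fun _ _ => (hp false _).1 _]
    _ ≤ ∑ w ∈ E, EReal.exp (-(((m : ℝ≥0∞) * h : ℝ≥0∞) : EReal))
        * ∏ t : Fin m, ∏ i, ENNReal.ofReal (groupTypes Ω nk (p false) w (Ω t i) (w t i)) :=
        sum_le_sum fun w hw =>
          (prod_prod_ofReal_le_exp_neg_sum_klD_mul Ω w (hp false)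
            (groupTypes_mem_stdSimplex hΩ (hp false) w)
            (natCast_groupCount_eq_groupTypes_mul hΩ (p false) w)).trans
          (mul_le_mul_left (EReal.exp_neg_coe_antitone (hmh w hw)) _)
    _ ≤ _ := by
        rw [← mul_sum]
        exact mul_le_mul_right (sum_prod_prod_ofReal_groupTypes_le hΩ (hp false) E) _
end

section
/- (Proposition 1.) Suppose 𝒳 is a finite alphabet, each p_{θ,k} has full support, the change occurs at ν = 1, and Ω = (σ_1, σ_2, …) is an arbitrary label sequence (so X^n[t] ∼ ℙ_{1,σ_t} for all t ≥ 1, independently across t). Let Π_{X^n[1,t]} denote the empirical distribution of all nt samples observed up to time t, and α_k = n_k/n. Then, ℙ^1_Ω-almost surely, n·[ f_{𝐏_0}(α, Π_{X^n[1,t]}) − f_{𝐏_1}(α, Π_{X^n[1,t]}) ] → n·f_{𝐏_0}(α, Σ_{k=1}^K α_k p_{1,k}) as t → ∞. -/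
/-!
By the strong law of large numbers, applied for each letter to the per-time-step counts (which
are i.i.d. in time because every labelling has the same group sizes, so rows agree in law up to
a permutation of the sensors), the empirical distribution converges almost surely to the
mixture `Q = ∑ₖ αₖ p₁ₖ`, which has full support. At such a point `f_P(α, ·)` is continuous
relative to the simplex: a decomposition `(Uₖ)` of `Q` yields the decomposition
`(1 - r) Uₖ + (Q' - (1 - r) Q)` of any `Q'` with `(1 - r) Q ≤ Q'`, at distance at most
`‖Q' - Q‖ + r` from `(Uₖ)`, and the weighted divergence is uniformly continuous on the compact
set of tuples of probability vectors. Finally `f_{P₁}(α, Q) = 0`, witnessed by `Uₖ = p₁ₖ`.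
-/

open MeasureTheory
open scoped ENNReal

open Finset Filter Topology

lemma exists_perm_comp_eq_of_card_filter_eq {α β : Type*} [Fintype α] [DecidableEq β]
    {g h : α → β} (hgh : ∀ b, #{a | h a = b} = #{a | g a = b}) :
    ∃ π : Equiv.Perm α, ∀ a, g (π a) = h a := by
  have e : ∀ b, {a // h a = b} ≃ {a // g a = b} := fun b =>
    Fintype.equivOfCardEq (by simpa only [Fintype.card_subtype] using hgh b)
  exact ⟨(Equiv.sigmaFiberEquiv h).symm.trans
    ((Equiv.sigmaCongrRight e).trans (Equiv.sigmaFiberEquiv g)), fun a => (e _ _).2⟩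

lemma sum_comp_eq_sum_card_filter_mul {α β R : Type*} [Fintype α] [Fintype β] [DecidableEq β]
    [NonAssocSemiring R] (g : α → β) (f : β → R) : ∑ a, f (g a) = ∑ b, #{a | g a = b} * f b := by
  simp_rw [← sum_fiberwise' univ g f, sum_const, nsmul_eq_mul]

noncomputable def empirical {α β : Type*} [DecidableEq β] (s : Finset α) (f : α → β) :
    β → ℝ :=
  fun b => (#{a ∈ s | f a = b} : ℝ) / #s

lemma empirical_mem_stdSimplex {α β : Type*} [Fintype β] [DecidableEq β] {s : Finset α}
    (hs : s.Nonempty) (f : α → β) : empirical s f ∈ stdSimplex ℝ β := by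
  refine ⟨fun b => div_nonneg (Nat.cast_nonneg _) (Nat.cast_nonneg _), ?_⟩
  simp only [empirical]
  rw [← sum_div, ← Nat.cast_sum,
    ← card_eq_sum_card_fiberwise fun a _ => mem_coe.2 (mem_univ (f a))]
  exact div_self (Nat.cast_ne_zero.2 hs.card_pos.ne')

lemma mixture_pos {𝒳 : Type*} {K : ℕ} {α : Fin K → ℝ} {P : Fin K → 𝒳 → ℝ}
    (hα : α ∈ stdSimplex ℝ (Fin K)) (hP : ∀ k x, 0 < P k x) (x : 𝒳) :
    0 < ∑ k, α k * P k x := by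
  obtain ⟨k, -, hk⟩ := exists_lt_of_sum_lt (s := univ) (f := 0) (g := α) (by simp [hα.2])
  exact sum_pos' (fun k _ => mul_nonneg (hα.1 k) (hP k x).le) ⟨k, mem_univ k, mul_pos hk (hP k x)⟩

section Divergence

variable {𝒳 : Type*} [Fintype 𝒳] {K : ℕ}

noncomputable def klDivReal (U P : 𝒳 → ℝ) : ℝ :=
  ∑ x, (U x * Real.log (U x) - U x * Real.log (P x))

lemma klD_eq_ofReal_klDivReal {U P : 𝒳 → ℝ} (hP : ∀ x, 0 < P x) :
    klD U P = ENNReal.ofReal (klDivReal U P) := by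
  rw [klD, if_pos fun x hx => absurd hx (hP x).ne']
  congr 1
  refine sum_congr rfl fun x _ => ?_
  rcases eq_or_ne (U x) 0 with h | h
  · simp [h]
  · rw [Real.log_div h (hP x).ne', mul_sub]

lemma continuous_klDivReal (P : 𝒳 → ℝ) : Continuous fun U : 𝒳 → ℝ => klDivReal U P :=
  continuous_finsetSum _ fun x _ =>
    (Real.continuous_mul_log.comp (continuous_apply x)).sub
      ((continuous_apply x).mul continuous_const)

lemma klDivReal_self (P : 𝒳 → ℝ) : klDivReal P P = 0 := by
  simp [klDivReal]

/-- The truncation at `0` mirrors the `ENNReal.ofReal` in `klD`. -/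
noncomputable def weightedKL (α : Fin K → ℝ) (P U : Fin K → 𝒳 → ℝ) : ℝ :=
  ∑ k, α k * max (klDivReal (U k) (P k)) 0

lemma weightedKL_nonneg {α : Fin K → ℝ} (hα : ∀ k, 0 ≤ α k) (P U : Fin K → 𝒳 → ℝ) :
    0 ≤ weightedKL α P U :=
  sum_nonneg fun k _ => mul_nonneg (hα k) (le_max_right _ _)

lemma continuous_weightedKL (α : Fin K → ℝ) (P : Fin K → 𝒳 → ℝ) :
    Continuous (weightedKL α P) :=
  continuous_finsetSum _ fun k _ => continuous_const.mul
    (((continuous_klDivReal (P k)).comp (continuous_apply k)).max continuous_const)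

def decompositions (α : Fin K → ℝ) (Q : 𝒳 → ℝ) : Set (Fin K → 𝒳 → ℝ) :=
  {U | (∀ k, U k ∈ stdSimplex ℝ 𝒳) ∧ ∀ x, ∑ k, α k * U k x = Q x}

lemma decompositions_subset_pi (α : Fin K → ℝ) (Q : 𝒳 → ℝ) :
    decompositions α Q ⊆ Set.univ.pi fun _ => stdSimplex ℝ 𝒳 :=
  fun _ hU => Set.mem_univ_pi.2 hU.1

lemma const_mem_decompositions {α : Fin K → ℝ} (hα : ∑ k, α k = 1) {Q : 𝒳 → ℝ}
    (hQ : Q ∈ stdSimplex ℝ 𝒳) : (fun _ => Q) ∈ decompositions α Q :=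
  ⟨fun _ => hQ, fun x => by rw [← sum_mul, hα, one_mul]⟩

noncomputable def fPReal (α : Fin K → ℝ) (P : Fin K → 𝒳 → ℝ) (Q : 𝒳 → ℝ) : ℝ :=
  ⨅ U : decompositions α Q, weightedKL α P U

variable {α : Fin K → ℝ} {P : Fin K → 𝒳 → ℝ} {Q : 𝒳 → ℝ}

lemma mixture_mem_stdSimplex_s17 (hα : α ∈ stdSimplex ℝ (Fin K)) (hP : ∀ k, P k ∈ stdSimplex ℝ 𝒳) :
    (fun x => ∑ k, α k * P k x) ∈ stdSimplex ℝ 𝒳 := by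
  refine ⟨fun x => sum_nonneg fun k _ => mul_nonneg (hα.1 k) ((hP k).1 x), ?_⟩
  simp_rw [sum_comm (γ := 𝒳), ← mul_sum, (hP _).2, mul_one, hα.2]

lemma fPReal_le_weightedKL (hα : ∀ k, 0 ≤ α k) {U : Fin K → 𝒳 → ℝ}
    (hU : U ∈ decompositions α Q) : fPReal α P Q ≤ weightedKL α P U :=
  ciInf_le (f := fun V : decompositions α Q => weightedKL α P V)
    ⟨0, Set.forall_mem_range.2 fun V => weightedKL_nonneg hα P V⟩ ⟨U, hU⟩

lemma fPReal_nonneg (hα : ∀ k, 0 ≤ α k) : 0 ≤ fPReal α P Q :=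
  Real.iInf_nonneg fun U => weightedKL_nonneg hα P U

lemma fP_eq_ofReal_fPReal (hα : α ∈ stdSimplex ℝ (Fin K)) (hP : ∀ k x, 0 < P k x)
    (hQ : Q ∈ stdSimplex ℝ 𝒳) : fP α P Q = ENNReal.ofReal (fPReal α P Q) := by
  have : Nonempty (decompositions α Q) := ⟨⟨_, const_mem_decompositions hα.2 hQ⟩⟩
  rw [fPReal, ENNReal.ofReal_iInf, fP, iInf_subtype']
  refine iInf_congr fun U => ?_
  rw [weightedKL, ENNReal.ofReal_sum_of_nonneg fun k _ => mul_nonneg (hα.1 k) (le_max_right _ _)]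
  refine sum_congr rfl fun k _ => ?_
  rw [ENNReal.ofReal_mul (hα.1 k), klD_eq_ofReal_klDivReal (hP k), ENNReal.ofReal_max,
    ENNReal.ofReal_zero, max_eq_left zero_le]

lemma toReal_fP (hα : α ∈ stdSimplex ℝ (Fin K)) (hP : ∀ k x, 0 < P k x)
    (hQ : Q ∈ stdSimplex ℝ 𝒳) : (fP α P Q).toReal = fPReal α P Q := by
  rw [fP_eq_ofReal_fPReal hα hP hQ, ENNReal.toReal_ofReal (fPReal_nonneg hα.1)]

lemma fPReal_mixture_eq_zero (hα : ∀ k, 0 ≤ α k) (hP : ∀ k, P k ∈ stdSimplex ℝ 𝒳) :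
    fPReal α P (fun x => ∑ k, α k * P k x) = 0 := by
  refine le_antisymm ?_ (fPReal_nonneg hα)
  refine (fPReal_le_weightedKL hα (U := P) ⟨hP, fun x => rfl⟩).trans_eq ?_
  simp [weightedKL, klDivReal_self]

lemma exists_mem_decompositions_dist_le (hα : ∑ k, α k = 1) {Q Q' : 𝒳 → ℝ}
    (hQ : Q ∈ stdSimplex ℝ 𝒳) (hQ' : ∑ x, Q' x = 1) {r : ℝ} (hr0 : 0 ≤ r) (hr1 : r ≤ 1)
    (hQQ' : ∀ x, Q x - Q' x ≤ r * Q x) {U : Fin K → 𝒳 → ℝ} (hU : U ∈ decompositions α Q) :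
    ∃ V ∈ decompositions α Q', dist V U ≤ dist Q' Q + r := by
  refine ⟨fun k x => (1 - r) * U k x + (Q' x - (1 - r) * Q x), ⟨fun k => ⟨fun x => ?_, ?_⟩,
    fun x => ?_⟩, ?_⟩
  · nlinarith [hQQ' x, (hU.1 k).1 x]
  · rw [sum_add_distrib, ← mul_sum, sum_sub_distrib, ← mul_sum, (hU.1 k).2, hQ.2, hQ']
    ring
  · simp only [mul_add, sum_add_distrib, ← sum_mul, hα, mul_left_comm (α _), ← mul_sum, hU.2 x]
    ring
  · refine dist_pi_le_iff (by positivity) |>.2 fun k => dist_pi_le_iff (by positivity) |>.2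
      fun x => ?_
    have hQU := mem_Icc_of_mem_stdSimplex hQ x
    have hUQ := mem_Icc_of_mem_stdSimplex (hU.1 k) x
    have hQ'Q : |Q' x - Q x| ≤ dist Q' Q := Real.dist_eq _ _ ▸ dist_le_pi_dist Q' Q x
    rw [Real.dist_eq, abs_le] at *
    constructor <;> nlinarith [hQU.1, hQU.2, hUQ.1, hUQ.2]

lemma fPReal_le_fPReal_add (hα : α ∈ stdSimplex ℝ (Fin K)) {Q Q' : 𝒳 → ℝ}
    (hQ : Q ∈ stdSimplex ℝ 𝒳) (hQ' : ∑ x, Q' x = 1) {r δ e : ℝ} (hr0 : 0 ≤ r) (hr1 : r ≤ 1)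
    (hQQ' : ∀ x, Q x - Q' x ≤ r * Q x) (hclose : dist Q' Q + r < δ)
    (hmod : ∀ U ∈ decompositions α Q, ∀ V ∈ decompositions α Q', dist V U < δ →
      weightedKL α P V ≤ weightedKL α P U + e) :
    fPReal α P Q' ≤ fPReal α P Q + e := by
  have : Nonempty (decompositions α Q) := ⟨⟨_, const_mem_decompositions hα.2 hQ⟩⟩
  rw [← sub_le_iff_le_add]
  refine le_ciInf fun ⟨U, hU⟩ => ?_
  obtain ⟨V, hV, hVU⟩ := exists_mem_decompositions_dist_le hα.2 hQ hQ' hr0 hr1 hQQ' hU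
  have := hmod U hU V hV (hVU.trans_lt hclose)
  have := fPReal_le_weightedKL (P := P) hα.1 hV
  linarith

lemma continuousWithinAt_fPReal (hα : α ∈ stdSimplex ℝ (Fin K)) (P : Fin K → 𝒳 → ℝ)
    (hQ : Q ∈ stdSimplex ℝ 𝒳) (hQpos : ∀ x, 0 < Q x) :
    ContinuousWithinAt (fPReal α P) (stdSimplex ℝ 𝒳) Q := by
  have hne : (univ : Finset 𝒳).Nonempty :=
    univ_nonempty_iff.2 (nonempty_of_sum_ne_zero (by rw [hQ.2]; exact one_ne_zero)).nonempty
  obtain ⟨x₀, -, hx₀⟩ := exists_min_image univ Q hne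
  set m := Q x₀
  have hm : 0 < m := hQpos x₀
  have hm1 : m ≤ 1 := (mem_Icc_of_mem_stdSimplex hQ x₀).2
  rw [Metric.continuousWithinAt_iff]
  intro e he
  have hunif := (isCompact_univ_pi fun _ : Fin K => isCompact_stdSimplex ℝ 𝒳)
    |>.uniformContinuousOn_of_continuous (continuous_weightedKL α P).continuousOn
  obtain ⟨δ, hδ, hmod⟩ := Metric.uniformContinuousOn_iff.1 hunif (e / 2) (half_pos he)
  have hmod' : ∀ {Q₁ Q₂ : 𝒳 → ℝ}, ∀ U ∈ decompositions α Q₁, ∀ V ∈ decompositions α Q₂,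
      dist V U < δ → weightedKL α P V ≤ weightedKL α P U + e / 2 := by
    intro Q₁ Q₂ U hU V hV hVU
    have := hmod V (decompositions_subset_pi α Q₂ hV) U (decompositions_subset_pi α Q₁ hU) hVU
    rw [Real.dist_eq, abs_lt] at this
    linarith
  set r := min (δ / 2) 1
  have hr0 : 0 < r := lt_min (half_pos hδ) one_pos
  have hr1 : r ≤ 1 := min_le_right _ _
  have hrδ : r ≤ δ / 2 := min_le_left _ _
  refine ⟨r * m / 2, by positivity, fun {Q'} hQ' hd => ?_⟩
  have hclose : dist Q' Q + r < δ := by nlinarith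
  have hQx : ∀ x, |Q' x - Q x| < r * m / 2 := fun x =>
    (Real.dist_eq _ _ ▸ dist_le_pi_dist Q' Q x).trans_lt hd
  have h₁ : fPReal α P Q' ≤ fPReal α P Q + e / 2 := by
    refine fPReal_le_fPReal_add hα hQ hQ'.2 hr0.le hr1 (fun x => ?_) hclose hmod'
    nlinarith [hx₀ x (mem_univ x), abs_lt.1 (hQx x)]
  have h₂ : fPReal α P Q ≤ fPReal α P Q' + e / 2 := by
    refine fPReal_le_fPReal_add hα hQ' hQ.2 hr0.le hr1 (fun x => ?_)
      (by rwa [dist_comm]) hmod'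
    nlinarith [hx₀ x (mem_univ x), abs_lt.1 (hQx x)]
  rw [Real.dist_eq, abs_lt]
  constructor <;> linarith

lemma tendsto_toReal_fP_sub_toReal_fP {ι : Type*} {l : Filter ι} (hα : α ∈ stdSimplex ℝ (Fin K))
    {P₀ P₁ : Fin K → 𝒳 → ℝ} (hP₀ : ∀ k x, 0 < P₀ k x) (hP₁ : ∀ k, P₁ k ∈ stdSimplex ℝ 𝒳)
    (hP₁pos : ∀ k x, 0 < P₁ k x) {Q : ι → 𝒳 → ℝ}
    (hQ : Tendsto Q l (𝓝[stdSimplex ℝ 𝒳] fun x => ∑ k, α k * P₁ k x)) :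
    Tendsto (fun t => (fP α P₀ (Q t)).toReal - (fP α P₁ (Q t)).toReal) l
      (𝓝 (fP α P₀ fun x => ∑ k, α k * P₁ k x).toReal) := by
  have hmix := mixture_mem_stdSimplex_s17 hα hP₁
  have h₀ := (continuousWithinAt_fPReal hα P₀ hmix (mixture_pos hα hP₁pos)).tendsto.comp hQ
  have h₁ := (continuousWithinAt_fPReal hα P₁ hmix (mixture_pos hα hP₁pos)).tendsto.comp hQ
  rw [fPReal_mixture_eq_zero hα.1 hP₁] at h₁
  rw [toReal_fP hα hP₀ hmix, ← sub_zero (fPReal _ _ _)]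
  refine (h₀.sub h₁).congr' ?_
  filter_upwards [(tendsto_nhdsWithin_iff.1 hQ).2] with t ht
  rw [Function.comp_apply, Function.comp_apply, toReal_fP hα hP₀ ht, toReal_fP hα hP₁pos ht]

end Divergence

section Probability

open ProbabilityTheory

variable {Ω 𝒳 ι : Type*} [MeasurableSpace Ω] {μ : Measure Ω}

lemma sum_measureReal_preimage_eq_sum_card_filter_mul [Fintype ι] {κ : Type*} [Fintype κ]
    [DecidableEq κ] {Y : ι → Ω → 𝒳} {lab : ι → κ} {q : κ → 𝒳 → ℝ} (hq : ∀ k x, 0 ≤ q k x)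
    (hY : ∀ i x, μ {ω | Y i ω = x} = ENNReal.ofReal (q (lab i) x)) (x : 𝒳) :
    ∑ i, μ.real (Y i ⁻¹' {x}) = ∑ k, #{i | lab i = k} * q k x := by
  rw [← sum_comp_eq_sum_card_filter_mul lab fun k => q k x]
  refine sum_congr rfl fun i _ => ?_
  rw [measureReal_def, ← ENNReal.toReal_ofReal (hq (lab i) x), ← hY]
  rfl

variable [MeasurableSpace 𝒳]

lemma identDistrib_of_measure_preimage_singleton_eq [Countable 𝒳] [MeasurableSingletonClass 𝒳]
    {Ω' : Type*} [MeasurableSpace Ω'] {ν : Measure Ω'} {f : Ω → 𝒳} {g : Ω' → 𝒳}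
    (hf : Measurable f) (hg : Measurable g) (h : ∀ x, μ (f ⁻¹' {x}) = ν (g ⁻¹' {x})) :
    IdentDistrib f g μ ν where
  aemeasurable_fst := hf.aemeasurable
  aemeasurable_snd := hg.aemeasurable
  map_eq := Measure.ext_of_singleton fun x => by
    rw [Measure.map_apply hf (measurableSet_singleton x),
      Measure.map_apply hg (measurableSet_singleton x), h]

lemma indepFun_rows {κ : Type*} [Fintype ι] {X : κ → ι → Ω → 𝒳}
    (hX : iIndepFun (fun q : κ × ι => X q.1 q.2) μ) (hXmeas : ∀ s j, Measurable (X s j))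
    {s r : κ} (hsr : s ≠ r) : IndepFun (fun ω j => X s j ω) (fun ω j => X r j ω) μ := by
  classical
  have hdisj : Disjoint ({s} ×ˢ univ : Finset (κ × ι)) ({r} ×ˢ univ) :=
    disjoint_product.2 (Or.inl (disjoint_singleton.2 hsr))
  have hrow : ∀ s' : κ, Measurable fun (v : ({s'} ×ˢ univ : Finset (κ × ι)) → 𝒳) (j : ι) =>
      v ⟨(s', j), by simp⟩ := fun s' => measurable_pi_lambda _ fun j => measurable_pi_apply _
  exact (hX.indepFun_finset _ _ hdisj fun q => hXmeas q.1 q.2).comp (hrow s) (hrow r)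

variable [Fintype ι] [MeasurableSingletonClass 𝒳]

lemma exists_perm_identDistrib_rows [Countable 𝒳] {κ : Type*} [DecidableEq κ] {X : ℕ → ι → Ω → 𝒳}
    (hXmeas : ∀ s j, Measurable (X s j)) {lab : ℕ → ι → κ} {law : κ → 𝒳 → ℝ≥0∞}
    (hX : ∀ s j x, μ {ω | X s j ω = x} = law (lab s j) x)
    (hlab : ∀ s k, #{j | lab 0 j = k} = #{j | lab s j = k}) (s : ℕ) :
    ∃ π : Equiv.Perm ι, ∀ j, IdentDistrib (X s (π j)) (X 0 j) μ μ := by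
  obtain ⟨π, hπ⟩ := exists_perm_comp_eq_of_card_filter_eq (hlab s)
  refine ⟨π, fun j => identDistrib_of_measure_preimage_singleton_eq (hXmeas _ _) (hXmeas _ _)
    fun x => ?_⟩
  change μ {ω | X s (π j) ω = x} = μ {ω | X 0 j ω = x}
  rw [hX, hX, hπ]

variable [Fintype 𝒳] [DecidableEq 𝒳] [Countable ι]

lemma ae_tendsto_sum_count_div {X : ℕ → ι → Ω → 𝒳}
    (hX : iIndepFun (fun q : ℕ × ι => X q.1 q.2) μ) (hXmeas : ∀ s j, Measurable (X s j))
    (hperm : ∀ s, ∃ π : Equiv.Perm ι, ∀ j, IdentDistrib (X s (π j)) (X 0 j) μ μ) (x : 𝒳) :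
    ∀ᵐ ω ∂μ, Tendsto
      (fun t : ℕ => (∑ s ∈ range t, ∑ j, if X s j ω = x then (1 : ℝ) else 0) / t) atTop
      (𝓝 (∑ j, μ.real (X 0 j ⁻¹' {x}))) := by
  have := hX.isProbabilityMeasure
  set count : (ι → 𝒳) → ℝ := fun v => ∑ j, if v j = x then 1 else 0
  have hcount : Measurable count := measurable_of_finite _
  have hind : ∀ j, (fun ω => if X 0 j ω = x then (1 : ℝ) else 0) = (X 0 j ⁻¹' {x}).indicator 1 :=
    fun j => funext fun ω => by classical simp [Set.indicator_apply]
  have hint : ∀ j, Integrable (fun ω => if X 0 j ω = x then (1 : ℝ) else 0) μ := fun j => by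
    rw [hind j]
    exact (integrable_const 1).indicator (hXmeas 0 j (measurableSet_singleton x))
  have hmean : ∫ ω, count (fun j => X 0 j ω) ∂μ = ∑ j, μ.real (X 0 j ⁻¹' {x}) := by
    rw [integral_finsetSum _ fun j _ => hint j]
    refine sum_congr rfl fun j _ => ?_
    rw [hind j, integral_indicator_one (hXmeas 0 j (measurableSet_singleton x))]
  have hident : ∀ s, IdentDistrib (fun ω => count (fun j => X s j ω))
      (fun ω => count (fun j => X 0 j ω)) μ μ := fun s => by
    obtain ⟨π, hπ⟩ := hperm s
    have hrow := IdentDistrib.pi hπ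
      (hX.precomp (g := fun j => (s, π j)) fun i j h => π.injective (congrArg Prod.snd h))
      (hX.precomp (g := fun j => (0, j)) fun i j h => congrArg Prod.snd h)
    convert hrow.comp hcount using 1
    · exact funext fun ω => (Equiv.sum_comp π fun j => if X s j ω = x then (1 : ℝ) else 0).symm
    · rfl
  have := strong_law_ae_real (fun s ω => count (fun j => X s j ω)) (integrable_finsetSum _
    fun j _ => hint j) (fun s r hsr => (indepFun_rows hX hXmeas hsr).comp hcount hcount) hident
  rwa [hmean] at this

lemma ae_tendsto_empirical {n : ℕ} (hn : 0 < n) {X : ℕ → Fin n → Ω → 𝒳}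
    (hX : iIndepFun (fun q : ℕ × Fin n => X q.1 q.2) μ) (hXmeas : ∀ s j, Measurable (X s j))
    (hperm : ∀ s, ∃ π : Equiv.Perm (Fin n), ∀ j, IdentDistrib (X s (π j)) (X 0 j) μ μ) :
    ∀ᵐ ω ∂μ, Tendsto (fun t => empirical (range t ×ˢ univ) fun q : ℕ × Fin n => X q.1 q.2 ω)
      atTop (𝓝[stdSimplex ℝ 𝒳] fun x => (∑ j, μ.real (X 0 j ⁻¹' {x})) / n) := by
  filter_upwards [ae_all_iff.2 (ae_tendsto_sum_count_div hX hXmeas hperm)] with ω hω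
  refine tendsto_nhdsWithin_iff.2 ⟨tendsto_pi_nhds.2 fun x => ?_, ?_⟩
  · refine ((hω x).div_const n).congr fun t => ?_
    simp only [empirical, card_filter, Nat.cast_sum, sum_product, card_product, card_range,
      card_univ, Fintype.card_fin, Nat.cast_mul, div_div, Nat.cast_ite, Nat.cast_one,
      Nat.cast_zero]
  · filter_upwards [eventually_ge_atTop 1] with t ht
    exact empirical_mem_stdSimplex ((nonempty_range_iff.2 (by omega)).product
      (univ_nonempty_iff.2 ⟨⟨0, hn⟩⟩)) _

end Probability

open Classical in
theorem stmt_17_general {𝒳 Ω' : Type*} [Fintype 𝒳] [DecidableEq 𝒳]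
    [MeasurableSpace 𝒳] [MeasurableSingletonClass 𝒳]
    [MeasurableSpace Ω'] (Pr : Measure Ω')
    (n K : ℕ) (hnpos : 0 < n) (nk : Fin K → ℕ) (hn : ∑ k, nk k = n)
    (p : Bool → Fin K → 𝒳 → ℝ)
    (hp : ∀ θ k, (∀ x, 0 < p θ k x) ∧ ∑ x, p θ k x = 1)
    (α : Fin K → ℝ) (hα : ∀ k, α k = (nk k : ℝ) / n)
    (lab : ℕ → Fin n → Fin K)
    (hlab : ∀ t k, (Finset.univ.filter (fun i => lab t i = k)).card = nk k)
    (X : ℕ → Fin n → Ω' → 𝒳)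
    (hXmeas : ∀ t i, Measurable (X t i))
    (hXdist : ∀ t i x, Pr {ω' | X t i ω' = x} = ENNReal.ofReal (p true (lab t i) x))
    (hXindep : ProbabilityTheory.iIndepFun
      (m := fun _ : ℕ × Fin n => (inferInstance : MeasurableSpace 𝒳))
      (fun q ω' => X q.1 q.2 ω') Pr) :
    ∀ᵐ ω' ∂Pr, Filter.Tendsto
      (fun t : ℕ => (n : ℝ) *
        ((fP α (p false) (fun x => (((Finset.range t ×ˢ (Finset.univ : Finset (Fin n))).filter
            (fun q => X q.1 q.2 ω' = x)).card : ℝ) / ((t * n : ℕ) : ℝ))).toReal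
         - (fP α (p true) (fun x => (((Finset.range t ×ˢ (Finset.univ : Finset (Fin n))).filter
            (fun q => X q.1 q.2 ω' = x)).card : ℝ) / ((t * n : ℕ) : ℝ))).toReal))
      Filter.atTop
      (nhds ((n : ℝ) * (fP α (p false) (fun x => ∑ k, α k * p true k x)).toReal)) := by
  have hn' : (n : ℝ) ≠ 0 := Nat.cast_ne_zero.2 hnpos.ne'
  have hα' : α ∈ stdSimplex ℝ (Fin K) := ⟨fun k => hα k ▸ by positivity, by
    simp_rw [hα, ← sum_div, ← Nat.cast_sum, hn, div_self hn']⟩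
  have hp₁ : ∀ k, p true k ∈ stdSimplex ℝ 𝒳 := fun k =>
    ⟨fun x => ((hp true k).1 x).le, (hp true k).2⟩
  have hperm := exists_perm_identDistrib_rows (law := fun k x => ENNReal.ofReal (p true k x))
    hXmeas hXdist fun s k => by rw [hlab, hlab]
  have hlimit : (fun x => (∑ j, Pr.real (X 0 j ⁻¹' {x})) / n) = fun x => ∑ k, α k * p true k x :=
    funext fun x => by
      simp_rw [sum_measureReal_preimage_eq_sum_card_filter_mul (fun k => (hp₁ k).1) (hXdist 0) x,
        hlab, sum_div, hα, div_mul_eq_mul_div]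
  filter_upwards [ae_tendsto_empirical hnpos hXindep hXmeas hperm] with ω hω
  rw [hlimit] at hω
  have hempirical : ∀ t, (fun x => (#{q ∈ range t ×ˢ univ | X q.1 q.2 ω = x} : ℝ) /
      ((t * n : ℕ) : ℝ)) = empirical (range t ×ˢ univ) fun q : ℕ × Fin n => X q.1 q.2 ω :=
    fun t => funext fun x => by
      simp only [empirical, card_product, card_range, card_univ, Fintype.card_fin, Nat.cast_mul]
  simp only [hempirical]
  exact (tendsto_toReal_fP_sub_toReal_fP hα' (fun k => (hp false k).1) hp₁
    (fun k => (hp true k).1) hω).const_mul _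

open Classical in
/-- Proposition 1: the change occurs at `ν = 1`, i.e. all samples are
post-change: `X t i` (sample of sensor `i` at time `t`, time indexed from `0`) are mutually
independent with `X t i ∼ p_{1, lab t i}`, where each labeling `lab t` has exactly `n_k`
sensors in group `k`.  Let `Π_t` be the empirical distribution of the first `n·t` samples.
Then almost surely
`n [f_{P0}(α, Π_t) − f_{P1}(α, Π_t)] → n f_{P0}(α, ∑_k α_k p_{1,k})` as `t → ∞`. -/
theorem stmt_17 {𝒳 Ω' : Type*} [Fintype 𝒳] [DecidableEq 𝒳]
    [MeasurableSpace 𝒳] [MeasurableSingletonClass 𝒳]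
    [MeasurableSpace Ω'] (Pr : Measure Ω') [IsProbabilityMeasure Pr]
    (n K : ℕ) (hnpos : 0 < n) (nk : Fin K → ℕ) (hn : ∑ k, nk k = n)
    (p : Bool → Fin K → 𝒳 → ℝ)
    (hp : ∀ θ k, (∀ x, 0 < p θ k x) ∧ ∑ x, p θ k x = 1)
    (α : Fin K → ℝ) (hα : ∀ k, α k = (nk k : ℝ) / n)
    (lab : ℕ → Fin n → Fin K)
    (hlab : ∀ t k, (Finset.univ.filter (fun i => lab t i = k)).card = nk k)
    (X : ℕ → Fin n → Ω' → 𝒳)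
    (hXmeas : ∀ t i, Measurable (X t i))
    (hXdist : ∀ t i x, Pr {ω' | X t i ω' = x} = ENNReal.ofReal (p true (lab t i) x))
    (hXindep : ProbabilityTheory.iIndepFun
      (m := fun _ : ℕ × Fin n => (inferInstance : MeasurableSpace 𝒳))
      (fun q ω' => X q.1 q.2 ω') Pr) :
    ∀ᵐ ω' ∂Pr, Filter.Tendsto
      (fun t : ℕ => (n : ℝ) *
        ((fP α (p false) (fun x => (((Finset.range t ×ˢ (Finset.univ : Finset (Fin n))).filter
            (fun q => X q.1 q.2 ω' = x)).card : ℝ) / ((t * n : ℕ) : ℝ))).toReal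
         - (fP α (p true) (fun x => (((Finset.range t ×ˢ (Finset.univ : Finset (Fin n))).filter
            (fun q => X q.1 q.2 ω' = x)).card : ℝ) / ((t * n : ℕ) : ℝ))).toReal))
      Filter.atTop
      (nhds ((n : ℝ) * (fP α (p false) (fun x => ∑ k, α k * p true k x)).toReal)) :=
  stmt_17_general Pr n K hnpos nk hn p hp α hα lab hlab X hXmeas hXdist hXindep
end
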